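/- arXiv:2101.09740 — 9 statements merged into one kernel-verified Lean document; each statement's English description precedes it below -/
import Mathlib

section
/- The function y ↦ V_𝒯(y) − (μ/2)‖y‖² is convex on ℝ^d; equivalently, V_𝒯 is μ-strongly convex (in the sense that subtracting the quadratic (μ/2)‖·‖² leaves a convex function, where μ may be negative). -/
open scoped RealInnerProductSpace BigOperators

/-- The auxiliary quadratic function `v_T(y, α)` from the strongly-convex extension
construction. -/
noncomputable def vT {d : ℕ} {I : Type*} [Fintype I] (L μ : ℝ)
    (x g : I → EuclideanSpace ℝ (Fin d)) (f : I → ℝ)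
    (y : EuclideanSpace ℝ (Fin d)) (α : I → ℝ) : ℝ :=
  L / 2 * ‖y‖ ^ 2
    - (L - μ) / 2 * ‖y - (1 / (L - μ)) • ∑ i, α i • (g i - μ • x i)‖ ^ 2
    + ∑ i, α i * (f i + 1 / (2 * (L - μ)) * ‖g i - L • x i‖ ^ 2 - L / 2 * ‖x i‖ ^ 2)

/-- The strongly-convex extension `V_T(y) = max_{α ∈ Δ_I} v_T(y, α)`. -/
noncomputable def VT {d : ℕ} {I : Type*} [Fintype I] (L μ : ℝ)
    (x g : I → EuclideanSpace ℝ (Fin d)) (f : I → ℝ)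
    (y : EuclideanSpace ℝ (Fin d)) : ℝ :=
  sSup (vT L μ x g f y '' stdSimplex ℝ I)


/-!
Expanding the square in `v_𝒯(y, α)`, the quadratic terms in `y` of `v_𝒯(y, α) − (μ/2)‖y‖²`
cancel, so it is affine in `y`. Hence `V_𝒯 − (μ/2)‖·‖²` is a pointwise supremum of affine
functions over the compact simplex, and therefore convex.
-/

theorem convexOn_csSup_image {E ι : Type*} [AddCommMonoid E] [Module ℝ E] {s : Set E}
    {K : Set ι} {φ : E → ι → ℝ} (hK : K.Nonempty) (hbdd : ∀ y ∈ s, BddAbove (φ y '' K))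
    (hφ : ∀ α ∈ K, ConvexOn ℝ s fun y => φ y α) :
    ConvexOn ℝ s fun y => sSup (φ y '' K) := by
  refine ⟨(hφ _ hK.some_mem).1, fun y hy z hz a b ha hb hab => csSup_le (hK.image _) ?_⟩
  rintro _ ⟨α, hα, rfl⟩
  calc φ (a • y + b • z) α ≤ a * φ y α + b * φ z α := (hφ α hα).2 hy hz ha hb hab
    _ ≤ a * sSup (φ y '' K) + b * sSup (φ z '' K) := by
      gcongr
      · exact le_csSup (hbdd y hy) (Set.mem_image_of_mem _ hα)
      · exact le_csSup (hbdd z hz) (Set.mem_image_of_mem _ hα)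

theorem csSup_image_sub_const {ι : Type*} {K : Set ι} {φ : ι → ℝ} (hK : K.Nonempty)
    (hbdd : BddAbove (φ '' K)) (c : ℝ) :
    sSup ((fun α => φ α - c) '' K) = sSup (φ '' K) - c := by
  rw [← Set.image_image (· - c) φ]
  exact ((OrderIso.subRight c).map_csSup' (hK.image φ) hbdd).symm

section StronglyConvexExtension

variable {d : ℕ} {I : Type*} [Fintype I] (L μ : ℝ)
  (x g : I → EuclideanSpace ℝ (Fin d)) (f : I → ℝ)

theorem convexOn_vT_sub_sq (α : I → ℝ) :
    ConvexOn ℝ Set.univ fun y => vT L μ x g f y α - μ / 2 * ‖y‖ ^ 2 := by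
  set w := (1 / (L - μ)) • ∑ i, α i • (g i - μ • x i)
  set c := ∑ i, α i * (f i + 1 / (2 * (L - μ)) * ‖g i - L • x i‖ ^ 2 - L / 2 * ‖x i‖ ^ 2)
  have h_affine : (fun y => vT L μ x g f y α - μ / 2 * ‖y‖ ^ 2)
      = ⇑((L - μ) • innerₗ (EuclideanSpace ℝ (Fin d)) w)
          + fun _ => c - (L - μ) / 2 * ‖w‖ ^ 2 := by
    funext y
    simp only [vT, norm_sub_sq_real, Pi.add_apply, LinearMap.smul_apply, innerₗ_apply_apply,
      smul_eq_mul, w, c, real_inner_comm y]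
    ring
  rw [h_affine]
  exact (((L - μ) • innerₗ _ w).convexOn convex_univ).add_const _

theorem continuous_vT (y : EuclideanSpace ℝ (Fin d)) : Continuous (vT L μ x g f y) := by
  unfold vT
  fun_prop

end StronglyConvexExtension

theorem stmt1_general {d : ℕ} {I : Type*} [Fintype I] [Nonempty I]
    {L μ : ℝ}
    (x g : I → EuclideanSpace ℝ (Fin d)) (f : I → ℝ) :
    ConvexOn ℝ Set.univ (fun y : EuclideanSpace ℝ (Fin d) =>
      VT L μ x g f y - μ / 2 * ‖y‖ ^ 2) := by
  have hΔ : (stdSimplex ℝ I).Nonempty := by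
    classical exact ⟨_, single_mem_stdSimplex ℝ (Classical.arbitrary I)⟩
  have hbdd (y : EuclideanSpace ℝ (Fin d)) (c : ℝ) :
      BddAbove ((fun α => vT L μ x g f y α - c) '' stdSimplex ℝ I) :=
    ((isCompact_stdSimplex ℝ I).image ((continuous_vT L μ x g f y).sub continuous_const)).bddAbove
  have h_sup : (fun y => VT L μ x g f y - μ / 2 * ‖y‖ ^ 2)
      = fun y => sSup ((fun α => vT L μ x g f y α - μ / 2 * ‖y‖ ^ 2) '' stdSimplex ℝ I) := by
    funext y
    rw [VT, csSup_image_sub_const hΔ (by simpa using hbdd y 0)]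
  rw [h_sup]
  exact convexOn_csSup_image hΔ (fun y _ => hbdd y _)
    (fun α _ => convexOn_vT_sub_sq L μ x g f α)

/-- `V_T(·) − (μ/2)‖·‖²` is convex on all of `ℝ^d`, i.e. `V_T` is `μ`-strongly convex
(where `μ` may be negative). -/
theorem stmt1 {d : ℕ} {I : Type*} [Fintype I] [Nonempty I]
    {L μ : ℝ} (hL : 0 < L) (hμL : μ < L)
    (x g : I → EuclideanSpace ℝ (Fin d)) (f : I → ℝ) :
    ConvexOn ℝ Set.univ (fun y : EuclideanSpace ℝ (Fin d) =>
      VT L μ x g f y - μ / 2 * ‖y‖ ^ 2) :=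
  stmt1_general x g f
end

section
/- The function V_𝒯 is differentiable at every point of ℝ^d; moreover, if in addition 0 ≤ μ, then its gradient ∇V_𝒯 is Lipschitz continuous with Lipschitz constant L (i.e., ‖∇V_𝒯(y) − ∇V_𝒯(z)‖ ≤ L‖y − z‖ for all y, z ∈ ℝ^d). -/
open scoped RealInnerProductSpace BigOperators

/-!
With `(u, b)` the linear map of `vTMap`, `v_𝒯(y, α) = L/2 ‖y‖² - ((L-μ)/2 ‖y - u α‖² - b α)`, so
`V_𝒯(y)` is `L/2 ‖y‖²` minus the minimum `W(y)` of `c/2 ‖y - w‖² - t` over the compact convex set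
`K = (u, b)(Δ_I) ⊆ ℝ^d × ℝ`, where `c = L - μ`. The first-order optimality condition at a
minimizer `(w_y, t_y)` makes `y ↦ w_y` firmly nonexpansive. Comparing the cost of the minimizer
for `y` with that of the minimizer for `z` bounds `W(z) - W(y) - ⟪c (y - w_y), z - y⟫` by
`c/2 ‖z - y‖²` on both sides, so `∇W(y) = c (y - w_y)` and `∇V_𝒯(y) = μ y + c w_y`, which is
`L`-Lipschitz when `μ ≥ 0`.
-/

open Filter Topology

section Moreau

variable {E : Type*} [NormedAddCommGroup E]

/-- Minimizing `moreauCost c y` over the hypograph of `h : E → ℝ` gives the Moreau envelope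
`min_w (c/2 ‖y - w‖² - h w)` of `-h`. -/
noncomputable def moreauCost (c : ℝ) (y : E) (q : E × ℝ) : ℝ := c / 2 * ‖y - q.1‖ ^ 2 - q.2

theorem continuous_moreauCost (c : ℝ) (y : E) : Continuous (moreauCost c y) := by
  unfold moreauCost
  fun_prop

variable [InnerProductSpace ℝ E]

theorem hasGradientAt_of_abs_le_mul_norm_sq [CompleteSpace E] {f : E → ℝ} {w y : E} {C : ℝ}
    (h : ∀ z, |f z - f y - ⟪w, z - y⟫| ≤ C * ‖z - y‖ ^ 2) : HasGradientAt f w y := by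
  rw [hasGradientAt_iff_isLittleO]
  refine (Asymptotics.IsBigO.of_bound C (Eventually.of_forall fun z => ?_)).trans_isLittleO
    (Asymptotics.isLittleO_pow_sub_sub y one_lt_two)
  simpa using h z

theorem HasGradientAt.sub [CompleteSpace E] {f g : E → ℝ} {f' g' y : E}
    (hf : HasGradientAt f f' y) (hg : HasGradientAt g g' y) :
    HasGradientAt (fun z => f z - g z) (f' - g') y := by
  rw [hasGradientAt_iff_hasFDerivAt] at *
  rw [map_sub]
  exact hf.fun_sub hg

theorem hasGradientAt_const_mul_norm_sq [CompleteSpace E] (a : ℝ) (y : E) :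
    HasGradientAt (fun z => a * ‖z‖ ^ 2) ((2 * a) • y) y := by
  refine hasGradientAt_of_abs_le_mul_norm_sq (C := |a|) fun z => ?_
  have h : ‖z‖ ^ 2 = ‖y‖ ^ 2 + 2 * ⟪y, z - y⟫ + ‖z - y‖ ^ 2 := by
    rw [← norm_add_sq_real, add_sub_cancel]
  have key : a * ‖z‖ ^ 2 - a * ‖y‖ ^ 2 - ⟪(2 * a) • y, z - y⟫ = a * ‖z - y‖ ^ 2 := by
    rw [real_inner_smul_left, h]
    ring
  rw [key, abs_mul, abs_of_nonneg (sq_nonneg ‖z - y‖)]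

theorem norm_le_of_norm_sq_le_inner {a b : E} (h : ‖b‖ ^ 2 ≤ ⟪a, b⟫) : ‖b‖ ≤ ‖a‖ := by
  nlinarith [real_inner_le_norm a b, norm_nonneg a, norm_nonneg b]

theorem inner_le_norm_sq_of_norm_sq_le_inner {a b : E} (h : ‖b‖ ^ 2 ≤ ⟪a, b⟫) :
    ⟪a, b⟫ ≤ ‖a‖ ^ 2 := by
  nlinarith [real_inner_le_norm a b, norm_le_of_norm_sq_le_inner h, norm_nonneg a]

theorem norm_smul_add_smul_sub_le {μ c : ℝ} (hμ : 0 ≤ μ) (hc : 0 ≤ c) {y z w w' : E}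
    (h : ‖w - w'‖ ≤ ‖y - z‖) :
    ‖(μ • y + c • w) - (μ • z + c • w')‖ ≤ (μ + c) * ‖y - z‖ :=
  calc ‖(μ • y + c • w) - (μ • z + c • w')‖ = ‖μ • (y - z) + c • (w - w')‖ := by
        congr 1; module
    _ ≤ μ * ‖y - z‖ + c * ‖w - w'‖ := by
        grw [norm_add_le, norm_smul, norm_smul, Real.norm_of_nonneg hμ, Real.norm_of_nonneg hc]
    _ ≤ (μ + c) * ‖y - z‖ := by nlinarith

variable {c : ℝ} {K : Set (E × ℝ)}

theorem moreauCost_add_smul_sub (y : E) (q q' : E × ℝ) (t : ℝ) :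
    moreauCost c y (q + t • (q' - q)) = moreauCost c y q
      - t * (c * ⟪y - q.1, q'.1 - q.1⟫ + (q'.2 - q.2)) + t ^ 2 * (c / 2 * ‖q'.1 - q.1‖ ^ 2) := by
  have : y - (q + t • (q' - q)).1 = (y - q.1) - t • (q'.1 - q.1) := by
    simp only [Prod.fst_add, Prod.smul_fst, Prod.fst_sub]; abel
  simp only [moreauCost, this, norm_sub_sq_real, real_inner_smul_right, norm_smul,
    Real.norm_eq_abs, mul_pow, sq_abs, Prod.snd_add, Prod.smul_snd, Prod.snd_sub, smul_eq_mul]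
  ring

theorem moreauCost_eq_add (y z : E) (q : E × ℝ) :
    moreauCost c z q = moreauCost c y q + c * ⟪y - q.1, z - y⟫ + c / 2 * ‖z - y‖ ^ 2 := by
  have : z - q.1 = (y - q.1) + (z - y) := by abel
  rw [moreauCost, moreauCost, this, norm_add_sq_real]
  ring

theorem IsMinOn.moreauCost_variational {y : E} {q q' : E × ℝ} (hK : Convex ℝ K) (hq : q ∈ K)
    (hmin : IsMinOn (moreauCost c y) K q) (hq' : q' ∈ K) :
    c * ⟪y - q.1, q'.1 - q.1⟫ + (q'.2 - q.2) ≤ 0 := by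
  set A := c * ⟪y - q.1, q'.1 - q.1⟫ + (q'.2 - q.2)
  set M := c / 2 * ‖q'.1 - q.1‖ ^ 2
  have hA : ∀ t ∈ Set.Ioc (0 : ℝ) 1, A ≤ t * M := by
    rintro t ⟨ht0, ht1⟩
    have h := hmin (hK.add_smul_sub_mem hq hq' ⟨ht0.le, ht1⟩)
    rw [Set.mem_ofPred_eq, moreauCost_add_smul_sub] at h
    change moreauCost c y q ≤ moreauCost c y q - t * A + t ^ 2 * M at h
    exact le_of_mul_le_mul_left (by linarith) ht0
  have hlim : Tendsto (fun t : ℝ => t * M) (𝓝[>] 0) (𝓝 0) :=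
    tendsto_nhdsWithin_of_tendsto_nhds (by simpa using (continuous_mul_const M).tendsto 0)
  exact ge_of_tendsto hlim (eventually_of_mem (Ioc_mem_nhdsGT one_pos) hA)

theorem moreauCost_firmlyNonexpansive (hc : 0 < c) (hK : Convex ℝ K) {y z : E} {q q' : E × ℝ}
    (hq : q ∈ K) (hmin : IsMinOn (moreauCost c y) K q)
    (hq' : q' ∈ K) (hmin' : IsMinOn (moreauCost c z) K q') :
    ‖q.1 - q'.1‖ ^ 2 ≤ ⟪y - z, q.1 - q'.1⟫ := by
  have h := hmin.moreauCost_variational hK hq hq'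
  have h' := hmin'.moreauCost_variational hK hq' hq
  have key : ⟪y - q.1, q'.1 - q.1⟫ + ⟪z - q'.1, q.1 - q'.1⟫
      = ‖q.1 - q'.1‖ ^ 2 - ⟪y - z, q.1 - q'.1⟫ := by
    rw [← real_inner_self_eq_norm_sq]
    simp only [inner_sub_left, inner_sub_right, real_inner_comm]
    ring
  nlinarith

theorem hasGradientAt_moreauCost [CompleteSpace E] (hc : 0 < c) (hK : Convex ℝ K)
    {p : E → E × ℝ} (hpK : ∀ y, p y ∈ K) (hp : ∀ y, IsMinOn (moreauCost c y) K (p y)) (y : E) :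
    HasGradientAt (fun y => moreauCost c y (p y)) (c • (y - (p y).1)) y := by
  refine hasGradientAt_of_abs_le_mul_norm_sq (C := c / 2) fun z => ?_
  have hz : moreauCost c z (p z) ≤ moreauCost c z (p y) := hp z (hpK y)
  have hy : moreauCost c y (p y) ≤ moreauCost c y (p z) := hp y (hpK z)
  have hfirm : c * ⟪z - y, (p z).1 - (p y).1⟫ ≤ c * ‖z - y‖ ^ 2 :=
    mul_le_mul_of_nonneg_left (inner_le_norm_sq_of_norm_sq_le_inner
      (moreauCost_firmlyNonexpansive hc hK (hpK z) (hp z) (hpK y) (hp y))) hc.le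
  have hsplit : ⟪z - (p z).1, y - z⟫
      = -‖z - y‖ ^ 2 - ⟪y - (p y).1, z - y⟫ + ⟪z - y, (p z).1 - (p y).1⟫ := by
    rw [← real_inner_self_eq_norm_sq]
    simp only [inner_sub_left, inner_sub_right, real_inner_comm]
    ring
  rw [moreauCost_eq_add y z (p y)] at hz
  rw [moreauCost_eq_add z y (p z), norm_sub_rev y z, hsplit] at hy
  rw [real_inner_smul_left, abs_le]
  constructor <;> nlinarith

end Moreau

section StronglyConvexExtension

variable {d : ℕ} {I : Type*} [Fintype I] (L μ : ℝ) (x g : I → EuclideanSpace ℝ (Fin d))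
  (f : I → ℝ)

/-- `α ↦ (u α, b α)`, where `v_𝒯(y, α) = L/2 ‖y‖² - ((L-μ)/2 ‖y - u α‖² - b α)`. -/
noncomputable def vTMap : (I → ℝ) →ₗ[ℝ] EuclideanSpace ℝ (Fin d) × ℝ :=
  ((1 / (L - μ)) • Fintype.linearCombination ℝ fun i => g i - μ • x i).prod
    (Fintype.linearCombination ℝ fun i =>
      f i + 1 / (2 * (L - μ)) * ‖g i - L • x i‖ ^ 2 - L / 2 * ‖x i‖ ^ 2)

theorem vT_eq_sub_moreauCost (y : EuclideanSpace ℝ (Fin d)) (α : I → ℝ) :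
    vT L μ x g f y α = L / 2 * ‖y‖ ^ 2 - moreauCost (L - μ) y (vTMap L μ x g f α) := by
  simp only [vT, moreauCost, vTMap, LinearMap.prod_apply, LinearMap.coe_smul,
    Function.prod_apply, Pi.smul_apply, Fintype.linearCombination_apply, smul_eq_mul]
  ring

theorem VT_eq_sub_moreauCost {y : EuclideanSpace ℝ (Fin d)} {q : EuclideanSpace ℝ (Fin d) × ℝ}
    (hq : q ∈ vTMap L μ x g f '' stdSimplex ℝ I)
    (hmin : IsMinOn (moreauCost (L - μ) y) (vTMap L μ x g f '' stdSimplex ℝ I) q) :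
    VT L μ x g f y = L / 2 * ‖y‖ ^ 2 - moreauCost (L - μ) y q := by
  have himage : vT L μ x g f y '' stdSimplex ℝ I
      = (fun q => L / 2 * ‖y‖ ^ 2 - moreauCost (L - μ) y q) ''
          (vTMap L μ x g f '' stdSimplex ℝ I) := by
    rw [Set.image_image]
    simp only [vT_eq_sub_moreauCost]
  rw [VT, himage]
  exact IsGreatest.csSup_eq ⟨Set.mem_image_of_mem _ hq,
    Set.forall_mem_image.2 fun q' hq' => sub_le_sub_left (hmin hq') _⟩

theorem hasGradientAt_VT (hμL : μ < L)
    {p : EuclideanSpace ℝ (Fin d) → EuclideanSpace ℝ (Fin d) × ℝ}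
    (hpK : ∀ y, p y ∈ vTMap L μ x g f '' stdSimplex ℝ I)
    (hp : ∀ y, IsMinOn (moreauCost (L - μ) y) (vTMap L μ x g f '' stdSimplex ℝ I) (p y))
    (y : EuclideanSpace ℝ (Fin d)) :
    HasGradientAt (VT L μ x g f) (μ • y + (L - μ) • (p y).1) y := by
  have hVT : VT L μ x g f = fun y => L / 2 * ‖y‖ ^ 2 - moreauCost (L - μ) y (p y) :=
    funext fun y => VT_eq_sub_moreauCost L μ x g f (hpK y) (hp y)
  rw [hVT]
  convert (hasGradientAt_const_mul_norm_sq (L / 2) y).sub (hasGradientAt_moreauCost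
    (sub_pos.2 hμL) ((convex_stdSimplex ℝ I).linear_image _) hpK hp y) using 1
  module

end StronglyConvexExtension

theorem stmt3_general {d : ℕ} {I : Type*} [Fintype I] [Nonempty I]
    {L μ : ℝ} (hμL : μ < L)
    (x g : I → EuclideanSpace ℝ (Fin d)) (f : I → ℝ) :
    (∀ y, DifferentiableAt ℝ (VT L μ x g f) y) ∧
    (0 ≤ μ → ∀ y z : EuclideanSpace ℝ (Fin d),
      ‖gradient (VT L μ x g f) y - gradient (VT L μ x g f) z‖ ≤ L * ‖y - z‖) := by
  set K := vTMap L μ x g f '' stdSimplex ℝ I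
  have hc : 0 < L - μ := sub_pos.2 hμL
  have hKconv : Convex ℝ K := (convex_stdSimplex ℝ I).linear_image _
  have hKcpt : IsCompact K :=
    (isCompact_stdSimplex ℝ I).image (vTMap L μ x g f).continuous_of_finiteDimensional
  choose p hpK hp using fun y => hKcpt.exists_isMinOn
    ((isPathConnected_stdSimplex I).nonempty.image _) (continuous_moreauCost (L - μ) y).continuousOn
  have hgrad := hasGradientAt_VT L μ x g f hμL hpK hp
  refine ⟨fun y => (hgrad y).differentiableAt, fun hμ y z => ?_⟩
  rw [(hgrad y).gradient, (hgrad z).gradient]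
  calc _ ≤ (μ + (L - μ)) * ‖y - z‖ := norm_smul_add_smul_sub_le hμ hc.le
        (norm_le_of_norm_sq_le_inner
          (moreauCost_firmlyNonexpansive hc hKconv (hpK y) (hp y) (hpK z) (hp z)))
    _ = L * ‖y - z‖ := by ring

/-- `V_T` is differentiable everywhere, and if moreover `0 ≤ μ` then its gradient is
Lipschitz continuous with constant `L`. -/
theorem stmt3 {d : ℕ} {I : Type*} [Fintype I] [Nonempty I]
    {L μ : ℝ} (hL : 0 < L) (hμL : μ < L)
    (x g : I → EuclideanSpace ℝ (Fin d)) (f : I → ℝ) :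
    (∀ y, DifferentiableAt ℝ (VT L μ x g f) y) ∧
    (0 ≤ μ → ∀ y z : EuclideanSpace ℝ (Fin d),
      ‖gradient (VT L μ x g f) y - gradient (VT L μ x g f) z‖ ≤ L * ‖y - z‖) :=
  stmt3_general hμL x g f
end

section
/- For every i ∈ I and every y ∈ ℝ^d, V_𝒯(y) ≥ f_i + ⟨g_i, y − x_i⟩ + (μ/2)‖y − x_i‖². -/
open scoped RealInnerProductSpace BigOperators

lemma quadratic_model_eq {E : Type*} [NormedAddCommGroup E] [InnerProductSpace ℝ E]
    {L μ : ℝ} (hμL : μ ≠ L) (x g y : E) (c : ℝ) :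
    L / 2 * ‖y‖ ^ 2 - (L - μ) / 2 * ‖y - (1 / (L - μ)) • (g - μ • x)‖ ^ 2
        + (c + 1 / (2 * (L - μ)) * ‖g - L • x‖ ^ 2 - L / 2 * ‖x‖ ^ 2)
      = c + ⟪g, y - x⟫ + μ / 2 * ‖y - x‖ ^ 2 := by
  have hLμ : L - μ ≠ 0 := sub_ne_zero.mpr hμL.symm
  simp only [← real_inner_self_eq_norm_sq, inner_sub_left, inner_sub_right, real_inner_smul_left,
    real_inner_smul_right, real_inner_comm y x, real_inner_comm y g, real_inner_comm x g]
  field_simp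
  ring

lemma vT_single {d : ℕ} {I : Type*} [Fintype I] [DecidableEq I] {L μ : ℝ} (hμL : μ ≠ L)
    (x g : I → EuclideanSpace ℝ (Fin d)) (f : I → ℝ) (i : I) (y : EuclideanSpace ℝ (Fin d)) :
    vT L μ x g f y (Pi.single i 1) = f i + ⟪g i, y - x i⟫ + μ / 2 * ‖y - x i‖ ^ 2 := by
  simp only [vT, Pi.single_apply, ite_smul, ite_mul, one_smul, one_mul, zero_smul, zero_mul,
    Finset.sum_ite_eq', Finset.mem_univ, if_true]
  exact quadratic_model_eq hμL (x i) (g i) y (f i)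

lemma vT_le_VT {d : ℕ} {I : Type*} [Fintype I] (L μ : ℝ)
    (x g : I → EuclideanSpace ℝ (Fin d)) (f : I → ℝ) (y : EuclideanSpace ℝ (Fin d))
    {α : I → ℝ} (hα : α ∈ stdSimplex ℝ I) : vT L μ x g f y α ≤ VT L μ x g f y := by
  have hcont : Continuous (vT L μ x g f y) := by unfold vT; fun_prop
  exact le_csSup ((isCompact_stdSimplex ℝ I).bddAbove_image hcont.continuousOn)
    (Set.mem_image_of_mem _ hα)

theorem stmt4_general {d : ℕ} {I : Type*} [Fintype I]
    {L μ : ℝ} (hμL : μ < L)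
    (x g : I → EuclideanSpace ℝ (Fin d)) (f : I → ℝ) :
    ∀ (i : I) (y : EuclideanSpace ℝ (Fin d)),
      f i + ⟪g i, y - x i⟫ + μ / 2 * ‖y - x i‖ ^ 2 ≤ VT L μ x g f y := by
  classical
  intro i y
  rw [← vT_single hμL.ne x g f i y]
  exact vT_le_VT L μ x g f y (single_mem_stdSimplex ℝ i)

/-- The extension `V_T` lies above every quadratic lower model built from the data:
`V_T(y) ≥ f_i + ⟪g_i, y − x_i⟫ + (μ/2)‖y − x_i‖²` for every `i` and `y`. -/
theorem stmt4 {d : ℕ} {I : Type*} [Fintype I] [Nonempty I]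
    {L μ : ℝ} (hL : 0 < L) (hμL : μ < L)
    (x g : I → EuclideanSpace ℝ (Fin d)) (f : I → ℝ) :
    ∀ (i : I) (y : EuclideanSpace ℝ (Fin d)),
      f i + ⟪g i, y - x i⟫ + μ / 2 * ‖y - x i‖ ^ 2 ≤ VT L μ x g f y :=
  stmt4_general hμL x g f
end

section
/- Let j, k ∈ I and suppose that for every i ∈ I one has f_j − (1/(L−μ))⟨g_j − μ x_j, g_i − μ x_i⟩ + (1/(2(L−μ)))‖g_j − L x_j‖² − (L/2)‖x_j‖² ≥ f_k − (1/(L−μ))⟨g_k − μ x_k, g_i − μ x_i⟩ + (1/(2(L−μ)))‖g_k − L x_k‖² − (L/2)‖x_k‖². Then for every y ∈ ℝ^d satisfying ⟨g_j − μ x_j, y⟩ > ⟨g_k − μ x_k, y⟩ and every α* ∈ Δ_I that maximizes α ↦ v_𝒯(y, α) over Δ_I, it holds that α*_k = 0. -/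
open scoped RealInnerProductSpace BigOperators

/-! If `α` maximizes `v(y, ·)` on the simplex with `α k > 0`, move a small mass `t` from `k` to `j`.
Writing `u i = g i - μ • x i`, `w = u j - u k` and `S = ∑ α i • u i`, the value changes by
`t (⟪w, y⟫ + (q j - q k - ⟪S, w⟫ / (L - μ))) - t² ‖w‖² / (2 (L - μ))`, where `q i` is the constant
term of the `i`-th piece. The hypothesis says `⟪u i, w⟫ / (L - μ) ≤ q j - q k` for every `i`, so
averaging with the weights `α` makes the bracket at least `⟪w, y⟫ > 0`, and a small enough `t`
strictly increases `v`. -/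

lemma sum_mul_le_of_mem_stdSimplex {I : Type*} [Fintype I] {α : I → ℝ} (hα : α ∈ stdSimplex ℝ I)
    {a : I → ℝ} {b : ℝ} (h : ∀ i, a i ≤ b) : ∑ i, α i * a i ≤ b :=
  calc ∑ i, α i * a i ≤ ∑ i, α i * b :=
        Finset.sum_le_sum fun i _ => mul_le_mul_of_nonneg_left (h i) (hα.1 i)
    _ = b := by rw [← Finset.sum_mul, hα.2, one_mul]

section Transfer

variable {I : Type*} [Fintype I] [DecidableEq I]

def transferMass (α : I → ℝ) (t : ℝ) (j k : I) : I → ℝ :=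
  α + t • (Pi.single j 1 - Pi.single k 1)

lemma sum_transferMass_smul {M : Type*} [AddCommGroup M] [Module ℝ M]
    (α : I → ℝ) (t : ℝ) (j k : I) (u : I → M) :
    ∑ i, transferMass α t j k i • u i = ∑ i, α i • u i + t • (u j - u k) := by
  simp [transferMass, add_smul, sub_smul, Finset.sum_add_distrib,
    Finset.sum_sub_distrib, Pi.single_apply, smul_sub]

lemma transferMass_mem_stdSimplex {α : I → ℝ} (hα : α ∈ stdSimplex ℝ I) {t : ℝ}
    (ht : 0 ≤ t) {j k : I} (hjk : j ≠ k) (htk : t ≤ α k) :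
    transferMass α t j k ∈ stdSimplex ℝ I := by
  refine ⟨fun i => ?_, ?_⟩
  · have := hα.1 i
    rcases eq_or_ne i k with rfl | hik
    · simp [transferMass, hjk.symm]; linarith
    · simp only [transferMass, Pi.add_apply, Pi.smul_apply, Pi.sub_apply, Pi.single_apply,
        if_neg hik, smul_eq_mul]
      split_ifs <;> linarith
  · simpa [hα.2] using sum_transferMass_smul α t j k (fun _ => (1 : ℝ))

end Transfer

lemma exists_pos_le_mul_sub_mul_sq_pos {a b c : ℝ} (ha : 0 < a) (hb : 0 < b) (hc : 0 ≤ c) :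
    ∃ t, 0 < t ∧ t ≤ a ∧ 0 < b * t - c * t ^ 2 := by
  set t := min a (b / (c + 1))
  have ht : 0 < t := lt_min ha (by positivity)
  have hct : c * t < b := by
    calc c * t ≤ c * (b / (c + 1)) := mul_le_mul_of_nonneg_left (min_le_right _ _) hc
      _ < b := by rw [mul_div_assoc', div_lt_iff₀ (by positivity)]; nlinarith
  exact ⟨t, ht, min_le_left _ _, by nlinarith⟩

lemma half_norm_sq_sub_smul_add_sub {E : Type*} [NormedAddCommGroup E] [InnerProductSpace ℝ E]
    {c : ℝ} (hc : c ≠ 0) (L : ℝ) (y S w : E) (Q δ t : ℝ) :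
    (L / 2 * ‖y‖ ^ 2 - c / 2 * ‖y - (1 / c) • (S + t • w)‖ ^ 2 + (Q + t * δ))
      - (L / 2 * ‖y‖ ^ 2 - c / 2 * ‖y - (1 / c) • S‖ ^ 2 + Q)
      = (⟪w, y⟫ + δ - ⟪S, w⟫ / c) * t - ‖w‖ ^ 2 / (2 * c) * t ^ 2 := by
  simp only [norm_sub_sq_real, norm_smul, norm_add_sq_real, inner_smul_right, inner_add_right,
    mul_pow, Real.norm_eq_abs, sq_abs, real_inner_comm y]
  field_simp
  ring

theorem stmt6_general {d : ℕ} {I : Type*} [Fintype I]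
    {L μ : ℝ} (hμL : μ < L)
    (x g : I → EuclideanSpace ℝ (Fin d)) (f : I → ℝ) (j k : I)
    (hjk : ∀ i : I,
      f j - 1 / (L - μ) * ⟪g j - μ • x j, g i - μ • x i⟫
          + 1 / (2 * (L - μ)) * ‖g j - L • x j‖ ^ 2 - L / 2 * ‖x j‖ ^ 2
        ≥ f k - 1 / (L - μ) * ⟪g k - μ • x k, g i - μ • x i⟫
          + 1 / (2 * (L - μ)) * ‖g k - L • x k‖ ^ 2 - L / 2 * ‖x k‖ ^ 2) :
    ∀ y : EuclideanSpace ℝ (Fin d), ⟪g j - μ • x j, y⟫ > ⟪g k - μ • x k, y⟫ →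
      ∀ α ∈ stdSimplex ℝ I, (∀ β ∈ stdSimplex ℝ I, vT L μ x g f y β ≤ vT L μ x g f y α) →
        α k = 0 := by
  classical
  intro y hy α hα hmax
  by_contra hαk
  set u := fun i => g i - μ • x i
  set q := fun i => f i + 1 / (2 * (L - μ)) * ‖g i - L • x i‖ ^ 2 - L / 2 * ‖x i‖ ^ 2
  set S := ∑ i, α i • u i
  have hc : 0 < L - μ := sub_pos.2 hμL
  have hwy : 0 < ⟪u j - u k, y⟫ := by rw [inner_sub_left]; linarith
  have hne : j ≠ k := by rintro rfl; exact lt_irrefl _ hy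
  have hslope : ⟪S, u j - u k⟫ / (L - μ) ≤ q j - q k := by
    have hterm : ∀ i, ⟪u i, u j - u k⟫ / (L - μ) ≤ q j - q k := fun i => by
      have := hjk i
      rw [inner_sub_right, real_inner_comm (u j), real_inner_comm (u k), sub_div]
      simp only [q, u] at this ⊢
      linarith [one_div_mul_eq_div (L - μ) ⟪g j - μ • x j, g i - μ • x i⟫,
        one_div_mul_eq_div (L - μ) ⟪g k - μ • x k, g i - μ • x i⟫]
    calc ⟪S, u j - u k⟫ / (L - μ) = ∑ i, α i * (⟪u i, u j - u k⟫ / (L - μ)) := by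
          simp only [S, sum_inner, real_inner_smul_left, Finset.sum_div, mul_div_assoc]
      _ ≤ q j - q k := sum_mul_le_of_mem_stdSimplex hα hterm
  obtain ⟨t, ht, htk, hgain⟩ := exists_pos_le_mul_sub_mul_sq_pos
    (lt_of_le_of_ne (hα.1 k) (Ne.symm hαk)) (add_pos_of_pos_of_nonneg hwy (sub_nonneg.2 hslope))
    (by positivity : 0 ≤ ‖u j - u k‖ ^ 2 / (2 * (L - μ)))
  have hincr : vT L μ x g f y (transferMass α t j k) - vT L μ x g f y α
      = (⟪u j - u k, y⟫ + (q j - q k - ⟪S, u j - u k⟫ / (L - μ))) * t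
        - ‖u j - u k‖ ^ 2 / (2 * (L - μ)) * t ^ 2 := by
    have hv : ∀ β : I → ℝ, vT L μ x g f y β = L / 2 * ‖y‖ ^ 2
        - (L - μ) / 2 * ‖y - (1 / (L - μ)) • ∑ i, β i • u i‖ ^ 2 + ∑ i, β i • q i := fun _ => rfl
    rw [hv, hv, sum_transferMass_smul, sum_transferMass_smul, smul_eq_mul,
      half_norm_sq_sub_smul_add_sub hc.ne']
    ring
  linarith [hmax _ (transferMass_mem_stdSimplex hα ht.le hne htk)]

/-- If the data at indices `j, k` satisfies the stated inequality for every `i`, then for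
any `y` with `⟪g_j − μx_j, y⟫ > ⟪g_k − μx_k, y⟫`, every maximizer `α` of `v_T(y, ·)` over
the unit simplex has `α_k = 0`. -/
theorem stmt6 {d : ℕ} {I : Type*} [Fintype I] [Nonempty I]
    {L μ : ℝ} (hL : 0 < L) (hμL : μ < L)
    (x g : I → EuclideanSpace ℝ (Fin d)) (f : I → ℝ) (j k : I)
    (hjk : ∀ i : I,
      f j - 1 / (L - μ) * ⟪g j - μ • x j, g i - μ • x i⟫
          + 1 / (2 * (L - μ)) * ‖g j - L • x j‖ ^ 2 - L / 2 * ‖x j‖ ^ 2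
        ≥ f k - 1 / (L - μ) * ⟪g k - μ • x k, g i - μ • x i⟫
          + 1 / (2 * (L - μ)) * ‖g k - L • x k‖ ^ 2 - L / 2 * ‖x k‖ ^ 2) :
    ∀ y : EuclideanSpace ℝ (Fin d), ⟪g j - μ • x j, y⟫ > ⟪g k - μ • x k, y⟫ →
      ∀ α ∈ stdSimplex ℝ I, (∀ β ∈ stdSimplex ℝ I, vT L μ x g f y β ≤ vT L μ x g f y α) →
        α k = 0 :=
  stmt6_general hμL x g f j k hjk
end

section
/- Let I = {0, …, n+m−1} and suppose: (i) x_0 = 0; (ii) ⟨g_i − μ x_i, g_j − μ x_j⟩ = ⟨g_i − μ x_i, g_k − μ x_k⟩ for all 0 ≤ i < j ≤ n−1 and all k ∈ K_j; (iii) for all 0 ≤ j ≤ n−1, i ∈ I and k ∈ K_j, f_j − (1/(L−μ))⟨g_i − μ x_i, g_j − μ x_j⟩ + (1/(2(L−μ)))‖g_j − L x_j‖² − (L/2)‖x_j‖² ≥ f_k − (1/(L−μ))⟨g_i − μ x_i, g_k − μ x_k⟩ + (1/(2(L−μ)))‖g_k − L x_k‖² − (L/2)‖x_k‖²; (iv)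 for each 0 ≤ j ≤ n−1 there exists v ∈ ℝ^d with ⟨g_j − μ x_j, v⟩ > ⟨g_k − μ x_k, v⟩ for all k ∈ K_j. Then V_𝒯 is a first-order zero-chain on {g_i − μ x_i}_{0≤i≤n−1}: for every 0 ≤ j ≤ n−1 and every y ∈ span{g_0 − μ x_0, …, g_{j−1} − μ x_{j−1}} (with span of the empty family equal to {0}), the gradient ∇V_𝒯(y) lies in span{g_0 − μ x_0, …, g_j − μ x_j}. -/
/-!
Expanding the square, `v_T(y, α) = μ/2 ‖y‖² + ⟪y, s α⟫ - ‖s α‖² / (2(L - μ)) + Σ α_i c_i` with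
`s α = Σ α_i (g_i - μ x_i)` and constants `c_i` (`vTOffset`). Since this is strongly concave in
`s α`, the value `s α` at a maximiser over the simplex is unique and `(L - μ)`-Lipschitz in `y`, so
`V_T` is differentiable with `∇V_T(y) = μ y + s α` (Danskin). For `y` in the span of the first `j`
directions, tilt `y` to `y + t v` with `v` from (iv): by (ii) and (iii), moving weight from any
`k ∈ K_j` to `j` then strictly increases the objective, so maximisers at `y + t v` put no weight
on `K_j` and their `s` lies in the span of the first `j + 1` directions. Letting `t → 0`, the
Lipschitz bound and the closedness of that span give the claim.
-/

open scoped RealInnerProductSpace BigOperators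

/-- `K_j`: the set of indices `k` such that `g_k − μ x_k` does not lie in the span of
`{g_0 − μ x_0, …, g_j − μ x_j}`. -/
def Kset {d n : ℕ} (μ : ℝ) (x g : Fin n → EuclideanSpace ℝ (Fin d)) (j : ℕ) :
    Set (Fin n) :=
  {k | g k - μ • x k ∉
    Submodule.span ℝ ((fun i => g i - μ • x i) '' {i : Fin n | (i : ℕ) ≤ j})}

theorem nonpos_of_forall_mul_sub_sq_le {D K ε : ℝ} (hε : 0 < ε)
    (h : ∀ t, 0 < t → t ≤ ε → t * D - t ^ 2 * K ≤ 0) : D ≤ 0 := by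
  by_contra! hD
  set t := min ε (D / (2 * (|K| + 1)))
  have ht : 0 < t := lt_min hε (by positivity)
  have htK : t * (2 * (|K| + 1)) ≤ D := (le_div_iff₀ (by positivity)).1 (min_le_right _ _)
  have := h t ht (min_le_left _ _)
  nlinarith [le_abs_self K]

theorem add_smul_single_sub_single_mem_stdSimplex {I : Type*} [Fintype I] [DecidableEq I]
    {a : I → ℝ} (ha : a ∈ stdSimplex ℝ I) {j k : I} (hjk : j ≠ k) {t : ℝ} (ht : 0 ≤ t)
    (htk : t ≤ a k) : a + t • (Pi.single j 1 - Pi.single k 1) ∈ stdSimplex ℝ I := by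
  refine ⟨fun i => ?_, ?_⟩
  · rcases eq_or_ne i j with rfl | hij
    · simp [hjk, add_nonneg (ha.1 i) ht]
    rcases eq_or_ne i k with rfl | hik
    · simp [hij, htk]
    · simp [hij, hik, ha.1 i]
  · simp [Finset.sum_add_distrib, ← Finset.mul_sum, ha.2]

theorem hasGradientAt_of_abs_sub_le {F : Type*} [NormedAddCommGroup F] [InnerProductSpace ℝ F]
    [CompleteSpace F] {f : F → ℝ} {f' x : F} (C : ℝ)
    (h : ∀ u, |f (x + u) - f x - ⟪f', u⟫| ≤ C * ‖u‖ ^ 2) :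
    HasGradientAt f f' x := by
  refine hasGradientAt_iff_isLittleO_nhds_zero.2 <|
    (Asymptotics.IsBigO.of_bound C (Filter.Eventually.of_forall fun u => ?_)).trans_isLittleO
      (Asymptotics.isLittleO_norm_pow_id (E' := F) one_lt_two)
  simpa using h u

section SimplexObjective

variable {E : Type*} [NormedAddCommGroup E] [InnerProductSpace ℝ E] {I : Type*} [Fintype I]
  (z : I → E) (c : I → ℝ) (κ : ℝ)

noncomputable def simplexObjective (y : E) (α : I → ℝ) : ℝ :=
  ⟪y, Fintype.linearCombination ℝ z α⟫ - ‖Fintype.linearCombination ℝ z α‖ ^ 2 / (2 * κ)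
    + α ⬝ᵥ c

variable {z c κ}

theorem simplexObjective_add_left (y u : E) (α : I → ℝ) :
    simplexObjective z c κ (y + u) α
      = simplexObjective z c κ y α + ⟪u, Fintype.linearCombination ℝ z α⟫ := by
  simp only [simplexObjective, inner_add_left]
  ring

theorem simplexObjective_add_smul (y : E) (a δ : I → ℝ) (t : ℝ) :
    simplexObjective z c κ y (a + t • δ)
      = simplexObjective z c κ y a
        + t * (⟪y - κ⁻¹ • Fintype.linearCombination ℝ z a, Fintype.linearCombination ℝ z δ⟫
          + δ ⬝ᵥ c)
        - t ^ 2 * (‖Fintype.linearCombination ℝ z δ‖ ^ 2 / (2 * κ)) := by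
  simp only [simplexObjective, map_add, map_smul, inner_add_right, inner_smul_right,
    inner_sub_left, real_inner_smul_left, norm_add_sq_real, norm_smul, Real.norm_eq_abs,
    mul_pow, sq_abs, add_dotProduct, smul_dotProduct, smul_eq_mul]
  ring

theorem continuous_simplexObjective (y : E) : Continuous (simplexObjective z c κ y) := by
  unfold simplexObjective
  fun_prop

theorem exists_isMaxOn_simplexObjective [Nonempty I] (y : E) :
    ∃ a ∈ stdSimplex ℝ I, IsMaxOn (simplexObjective z c κ y) (stdSimplex ℝ I) a := by
  classical
  exact (isCompact_stdSimplex ℝ I).exists_isMaxOn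
    ⟨_, single_mem_stdSimplex ℝ (Classical.arbitrary I)⟩
    (continuous_simplexObjective y).continuousOn

theorem inner_add_dotProduct_nonpos_of_isMaxOn {y : E} {a δ : I → ℝ} {ε : ℝ}
    (hmax : IsMaxOn (simplexObjective z c κ y) (stdSimplex ℝ I) a) (hε : 0 < ε)
    (hδ : ∀ t, 0 < t → t ≤ ε → a + t • δ ∈ stdSimplex ℝ I) :
    ⟪y - κ⁻¹ • Fintype.linearCombination ℝ z a, Fintype.linearCombination ℝ z δ⟫ + δ ⬝ᵥ c
      ≤ 0 := by
  refine nonpos_of_forall_mul_sub_sq_le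
    (K := ‖Fintype.linearCombination ℝ z δ‖ ^ 2 / (2 * κ)) hε fun t ht htε => ?_
  have hle : simplexObjective z c κ y (a + t • δ) ≤ simplexObjective z c κ y a :=
    hmax (hδ t ht htε)
  rw [simplexObjective_add_smul] at hle
  linarith

theorem apply_eq_zero_of_isMaxOn {y : E} {a : I → ℝ} (ha : a ∈ stdSimplex ℝ I)
    (hmax : IsMaxOn (simplexObjective z c κ y) (stdSimplex ℝ I) a) {j k : I}
    (h : 0 < ⟪y - κ⁻¹ • Fintype.linearCombination ℝ z a, z j - z k⟫ + (c j - c k)) :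
    a k = 0 := by
  classical
  have hjk : j ≠ k := by
    rintro rfl
    simp at h
  by_contra hak
  have hδ := inner_add_dotProduct_nonpos_of_isMaxOn (δ := Pi.single j 1 - Pi.single k 1) hmax
    (lt_of_le_of_ne (ha.1 k) (Ne.symm hak))
    fun t ht htk => add_smul_single_sub_single_mem_stdSimplex ha hjk ht.le htk
  simp only [map_sub, Fintype.linearCombination_apply_single, one_smul, sub_dotProduct,
    single_one_dotProduct] at hδ
  linarith

theorem simplexObjective_add_sq_le_of_isMaxOn {y : E} {a b : I → ℝ}
    (ha : a ∈ stdSimplex ℝ I) (hb : b ∈ stdSimplex ℝ I)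
    (hmax : IsMaxOn (simplexObjective z c κ y) (stdSimplex ℝ I) a) :
    simplexObjective z c κ y b
      + ‖Fintype.linearCombination ℝ z b - Fintype.linearCombination ℝ z a‖ ^ 2 / (2 * κ)
      ≤ simplexObjective z c κ y a := by
  have hD := inner_add_dotProduct_nonpos_of_isMaxOn (δ := b - a) hmax one_pos
    fun t ht ht1 => (convex_stdSimplex ℝ I).add_smul_sub_mem ha hb ⟨ht.le, ht1⟩
  have hexp := simplexObjective_add_smul (z := z) (c := c) (κ := κ) y a (b - a) 1
  rw [one_smul, add_sub_cancel, map_sub] at hexp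
  rw [map_sub] at hD
  linarith

theorem norm_sub_le_of_isMaxOn (hκ : 0 < κ) {y u : E} {a b : I → ℝ}
    (ha : a ∈ stdSimplex ℝ I) (hb : b ∈ stdSimplex ℝ I)
    (hmax_a : IsMaxOn (simplexObjective z c κ y) (stdSimplex ℝ I) a)
    (hmax_b : IsMaxOn (simplexObjective z c κ (y + u)) (stdSimplex ℝ I) b) :
    ‖Fintype.linearCombination ℝ z b - Fintype.linearCombination ℝ z a‖ ≤ κ * ‖u‖ := by
  set N := ‖Fintype.linearCombination ℝ z b - Fintype.linearCombination ℝ z a‖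
  have h_a := simplexObjective_add_sq_le_of_isMaxOn ha hb hmax_a
  have h_b := simplexObjective_add_sq_le_of_isMaxOn hb ha hmax_b
  rw [norm_sub_rev, simplexObjective_add_left, simplexObjective_add_left] at h_b
  have hN : N ^ 2 / κ ≤ ‖u‖ * N := by
    have := real_inner_le_norm u
      (Fintype.linearCombination ℝ z b - Fintype.linearCombination ℝ z a)
    rw [inner_sub_right] at this
    have : N ^ 2 / κ = N ^ 2 / (2 * κ) + N ^ 2 / (2 * κ) := by ring
    linarith
  rw [div_le_iff₀ hκ] at hN
  by_contra! hlt
  have hN0 : 0 < N := (mul_nonneg hκ.le (norm_nonneg u)).trans_lt hlt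
  nlinarith [mul_lt_mul_of_pos_right hlt hN0]

theorem simplexObjective_sub_mem_Icc_of_isMaxOn (hκ : 0 < κ) {y u : E} {a b : I → ℝ}
    (ha : a ∈ stdSimplex ℝ I) (hb : b ∈ stdSimplex ℝ I)
    (hmax_a : IsMaxOn (simplexObjective z c κ y) (stdSimplex ℝ I) a)
    (hmax_b : IsMaxOn (simplexObjective z c κ (y + u)) (stdSimplex ℝ I) b) :
    simplexObjective z c κ (y + u) b - simplexObjective z c κ y a
        - ⟪u, Fintype.linearCombination ℝ z a⟫ ∈ Set.Icc 0 (κ * ‖u‖ ^ 2) := by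
  have h_b : simplexObjective z c κ (y + u) a ≤ simplexObjective z c κ (y + u) b := hmax_b ha
  have h_a : simplexObjective z c κ y b ≤ simplexObjective z c κ y a := hmax_a hb
  have h_inner := real_inner_le_norm u
    (Fintype.linearCombination ℝ z b - Fintype.linearCombination ℝ z a)
  have h_lip := norm_sub_le_of_isMaxOn hκ ha hb hmax_a hmax_b
  have h_shift := simplexObjective_add_left (z := z) (c := c) (κ := κ) y u b
  rw [simplexObjective_add_left] at h_b
  rw [inner_sub_right] at h_inner
  constructor
  · linarith
  · nlinarith [norm_nonneg u]

theorem inner_linearCombination_le {b : I → ℝ} (hb : b ∈ stdSimplex ℝ I) {w : E} {r : ℝ}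
    (h : ∀ i, ⟪z i, w⟫ ≤ r) : ⟪Fintype.linearCombination ℝ z b, w⟫ ≤ r := by
  rw [Fintype.linearCombination_apply, sum_inner]
  calc ∑ i, ⟪b i • z i, w⟫ ≤ ∑ i, b i * r := by
        gcongr with i
        rw [real_inner_smul_left]
        exact mul_le_mul_of_nonneg_left (h i) (hb.1 i)
    _ = r := by rw [← Finset.sum_mul, hb.2, one_mul]

theorem linearCombination_mem_of_forall_isMaxOn_add_smul [Nonempty I] (hκ : 0 < κ) {S : Set E}
    (hS : IsClosed S) {y v : E} {a : I → ℝ} (ha : a ∈ stdSimplex ℝ I)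
    (hmax : IsMaxOn (simplexObjective z c κ y) (stdSimplex ℝ I) a)
    (h : ∀ t : ℝ, 0 < t → ∀ b ∈ stdSimplex ℝ I,
      IsMaxOn (simplexObjective z c κ (y + t • v)) (stdSimplex ℝ I) b →
        Fintype.linearCombination ℝ z b ∈ S) :
    Fintype.linearCombination ℝ z a ∈ S := by
  refine hS.closure_subset (Metric.mem_closure_iff.2 fun ε hε => ?_)
  set t := ε / (κ * (‖v‖ + 1))
  have ht : 0 < t := by positivity
  obtain ⟨b, hb, hbmax⟩ :=
    exists_isMaxOn_simplexObjective (z := z) (c := c) (κ := κ) (y + t • v)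
  refine ⟨_, h t ht b hb hbmax, ?_⟩
  rw [dist_comm, dist_eq_norm]
  calc ‖Fintype.linearCombination ℝ z b - Fintype.linearCombination ℝ z a‖
      ≤ κ * ‖t • v‖ := norm_sub_le_of_isMaxOn hκ ha hb hmax hbmax
    _ = ε * (‖v‖ / (‖v‖ + 1)) := by
        rw [norm_smul, Real.norm_of_nonneg ht.le]
        simp only [t]
        field_simp
    _ < ε := mul_lt_of_lt_one_right hε ((div_lt_one (by positivity)).2 (lt_add_one _))

theorem linearCombination_mem_of_isMaxOn [Nonempty I] (hκ : 0 < κ) {S : Submodule ℝ E}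
    (hS : IsClosed (S : Set E)) {y v : E} {j : I}
    (hy : ∀ k, z k ∉ S → ⟪y, z j - z k⟫ = 0)
    (hc : ∀ i k, z k ∉ S → κ⁻¹ * ⟪z i, z j - z k⟫ ≤ c j - c k)
    (hv : ∀ k, z k ∉ S → ⟪v, z k⟫ < ⟪v, z j⟫)
    {a : I → ℝ} (ha : a ∈ stdSimplex ℝ I)
    (hmax : IsMaxOn (simplexObjective z c κ y) (stdSimplex ℝ I) a) :
    Fintype.linearCombination ℝ z a ∈ S := by
  refine linearCombination_mem_of_forall_isMaxOn_add_smul (v := v) hκ hS ha hmax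
    fun t ht b hb hbmax => ?_
  rw [Fintype.linearCombination_apply]
  refine S.sum_mem fun k _ => ?_
  by_cases hk : z k ∈ S
  · exact S.smul_mem _ hk
  suffices b k = 0 by rw [this, zero_smul]; exact S.zero_mem
  refine apply_eq_zero_of_isMaxOn hb hbmax (j := j) ?_
  have hcb : ⟪Fintype.linearCombination ℝ z b, κ⁻¹ • (z j - z k)⟫ ≤ c j - c k :=
    inner_linearCombination_le hb fun i => by rw [real_inner_smul_right]; exact hc i k hk
  rw [real_inner_smul_right] at hcb
  rw [inner_sub_left, inner_add_left, real_inner_smul_left, real_inner_smul_left, hy k hk,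
    inner_sub_right v]
  nlinarith [hv k hk]

end SimplexObjective

section StronglyConvexExtension

variable {d : ℕ} {I : Type*}

noncomputable def vTOffset (L μ : ℝ) (x g : I → EuclideanSpace ℝ (Fin d)) (f : I → ℝ) :
    I → ℝ :=
  fun i => f i + 1 / (2 * (L - μ)) * ‖g i - L • x i‖ ^ 2 - L / 2 * ‖x i‖ ^ 2

variable [Fintype I] {L μ : ℝ} {x g : I → EuclideanSpace ℝ (Fin d)} {f : I → ℝ}

theorem vT_eq_simplexObjective (hμL : μ ≠ L) (y : EuclideanSpace ℝ (Fin d)) (α : I → ℝ) :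
    vT L μ x g f y α = μ / 2 * ‖y‖ ^ 2
      + simplexObjective (fun i => g i - μ • x i) (vTOffset L μ x g f) (L - μ) y α := by
  have hκ : L - μ ≠ 0 := sub_ne_zero.2 hμL.symm
  rw [vT, simplexObjective, ← Fintype.linearCombination_apply, norm_sub_sq_real,
    real_inner_smul_right, norm_smul, Real.norm_eq_abs, mul_pow, sq_abs]
  simp only [dotProduct, vTOffset]
  field_simp
  ring

theorem VT_eq_of_isMaxOn (hμL : μ ≠ L) {y : EuclideanSpace ℝ (Fin d)} {a : I → ℝ}
    (ha : a ∈ stdSimplex ℝ I)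
    (hmax : IsMaxOn (simplexObjective (fun i => g i - μ • x i) (vTOffset L μ x g f) (L - μ) y)
      (stdSimplex ℝ I) a) :
    VT L μ x g f y = μ / 2 * ‖y‖ ^ 2
      + simplexObjective (fun i => g i - μ • x i) (vTOffset L μ x g f) (L - μ) y a := by
  rw [VT, ← vT_eq_simplexObjective hμL]
  refine IsGreatest.csSup_eq ⟨⟨a, ha, rfl⟩, ?_⟩
  rintro _ ⟨b, hb, rfl⟩
  rw [vT_eq_simplexObjective hμL, vT_eq_simplexObjective hμL]
  gcongr
  exact hmax hb

theorem hasGradientAt_VT_s7 [Nonempty I] (hμL : μ < L) {y : EuclideanSpace ℝ (Fin d)}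
    {a : I → ℝ} (ha : a ∈ stdSimplex ℝ I)
    (hmax : IsMaxOn (simplexObjective (fun i => g i - μ • x i) (vTOffset L μ x g f) (L - μ) y)
      (stdSimplex ℝ I) a) :
    HasGradientAt (VT L μ x g f)
      (μ • y + Fintype.linearCombination ℝ (fun i => g i - μ • x i) a) y := by
  refine hasGradientAt_of_abs_sub_le (|μ| / 2 + (L - μ)) fun u => ?_
  obtain ⟨b, hb, hbmax⟩ := exists_isMaxOn_simplexObjective (y + u)
    (z := fun i => g i - μ • x i) (c := vTOffset L μ x g f) (κ := L - μ)
  obtain ⟨h_lower, h_upper⟩ :=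
    simplexObjective_sub_mem_Icc_of_isMaxOn (sub_pos.2 hμL) ha hb hmax hbmax
  rw [VT_eq_of_isMaxOn hμL.ne hb hbmax, VT_eq_of_isMaxOn hμL.ne ha hmax, norm_add_sq_real,
    inner_add_left, real_inner_smul_left, real_inner_comm u (Fintype.linearCombination ℝ _ a),
    abs_le]
  have h_neg := mul_le_mul_of_nonneg_right (neg_abs_le μ) (sq_nonneg ‖u‖)
  have h_pos := mul_le_mul_of_nonneg_right (le_abs_self μ) (sq_nonneg ‖u‖)
  have h_κ := mul_nonneg (sub_pos.2 hμL).le (sq_nonneg ‖u‖)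
  constructor <;> linarith

end StronglyConvexExtension

theorem stmt7_general {d n m : ℕ}
    {L μ : ℝ} (hμL : μ < L)
    (x g : Fin (n + m) → EuclideanSpace ℝ (Fin d)) (f : Fin (n + m) → ℝ)
    (hortho : ∀ i j : Fin (n + m), (i : ℕ) < (j : ℕ) → (j : ℕ) < n →
      ∀ k ∈ Kset μ x g (j : ℕ),
        ⟪g i - μ • x i, g j - μ • x j⟫ = ⟪g i - μ • x i, g k - μ • x k⟫)
    (hf : ∀ j : Fin (n + m), (j : ℕ) < n → ∀ i : Fin (n + m),
      ∀ k ∈ Kset μ x g (j : ℕ),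
        f j - 1 / (L - μ) * ⟪g i - μ • x i, g j - μ • x j⟫
            + 1 / (2 * (L - μ)) * ‖g j - L • x j‖ ^ 2 - L / 2 * ‖x j‖ ^ 2
          ≥ f k - 1 / (L - μ) * ⟪g i - μ • x i, g k - μ • x k⟫
            + 1 / (2 * (L - μ)) * ‖g k - L • x k‖ ^ 2 - L / 2 * ‖x k‖ ^ 2)
    (hsep : ∀ j : Fin (n + m), (j : ℕ) < n →
      ∃ v : EuclideanSpace ℝ (Fin d), ∀ k ∈ Kset μ x g (j : ℕ),
        ⟪g j - μ • x j, v⟫ > ⟪g k - μ • x k, v⟫) :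
    ∀ j : ℕ, j < n →
      ∀ y ∈ Submodule.span ℝ
          ((fun i : Fin (n + m) => g i - μ • x i) '' {i : Fin (n + m) | (i : ℕ) < j}),
        gradient (VT L μ x g f) y ∈ Submodule.span ℝ
          ((fun i : Fin (n + m) => g i - μ • x i) '' {i : Fin (n + m) | (i : ℕ) ≤ j}) := by
  intro j hj y hy
  let j' : Fin (n + m) := ⟨j, by omega⟩
  have : Nonempty (Fin (n + m)) := ⟨j'⟩
  obtain ⟨a, ha, hmax⟩ := exists_isMaxOn_simplexObjective y
    (z := fun i => g i - μ • x i) (c := vTOffset L μ x g f) (κ := L - μ)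
  rw [(hasGradientAt_VT_s7 hμL ha hmax).gradient]
  have hy' := Submodule.span_mono (R := ℝ)
    (Set.image_mono (f := fun i : Fin (n + m) => g i - μ • x i)
      fun i (hi : (i : ℕ) < j) => hi.le) hy
  refine Submodule.add_mem _ (Submodule.smul_mem _ μ hy') ?_
  obtain ⟨v, hv⟩ := hsep j' hj
  refine linearCombination_mem_of_isMaxOn (sub_pos.2 hμL)
    (Submodule.closed_of_finiteDimensional _) (j := j') (v := v)
    (fun k hk => ?_) (fun i k hk => ?_) (fun k hk => ?_) ha hmax
  · have hspan : Submodule.span ℝ ((fun i : Fin (n + m) => g i - μ • x i) ''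
        {i : Fin (n + m) | (i : ℕ) < j}) ≤ (ℝ ∙ ((g j' - μ • x j') - (g k - μ • x k)))ᗮ := by
      refine Submodule.span_le.2 ?_
      rintro _ ⟨i, hi, rfl⟩
      rw [SetLike.mem_coe, Submodule.mem_orthogonal_singleton_iff_inner_left, inner_sub_right,
        hortho i j' hi hj k hk, sub_self]
    exact Submodule.mem_orthogonal_singleton_iff_inner_left.1 (hspan hy)
  · have := hf j' hj i k hk
    simp only [vTOffset]
    rw [inner_sub_right, mul_sub, ← one_div]
    linarith
  · simpa only [real_inner_comm v] using hv k hk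

/-- Under conditions (i)–(iv), the strongly-convex extension `V_T` is a first-order
zero-chain on `{g_i − μ x_i}_{0 ≤ i ≤ n−1}`. -/
theorem stmt7 {d n m : ℕ} (hnm : 0 < n + m)
    {L μ : ℝ} (hL : 0 < L) (hμL : μ < L)
    (x g : Fin (n + m) → EuclideanSpace ℝ (Fin d)) (f : Fin (n + m) → ℝ)
    (hx0 : x ⟨0, hnm⟩ = 0)
    (hortho : ∀ i j : Fin (n + m), (i : ℕ) < (j : ℕ) → (j : ℕ) < n →
      ∀ k ∈ Kset μ x g (j : ℕ),
        ⟪g i - μ • x i, g j - μ • x j⟫ = ⟪g i - μ • x i, g k - μ • x k⟫)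
    (hf : ∀ j : Fin (n + m), (j : ℕ) < n → ∀ i : Fin (n + m),
      ∀ k ∈ Kset μ x g (j : ℕ),
        f j - 1 / (L - μ) * ⟪g i - μ • x i, g j - μ • x j⟫
            + 1 / (2 * (L - μ)) * ‖g j - L • x j‖ ^ 2 - L / 2 * ‖x j‖ ^ 2
          ≥ f k - 1 / (L - μ) * ⟪g i - μ • x i, g k - μ • x k⟫
            + 1 / (2 * (L - μ)) * ‖g k - L • x k‖ ^ 2 - L / 2 * ‖x k‖ ^ 2)
    (hsep : ∀ j : Fin (n + m), (j : ℕ) < n →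
      ∃ v : EuclideanSpace ℝ (Fin d), ∀ k ∈ Kset μ x g (j : ℕ),
        ⟪g j - μ • x j, v⟫ > ⟪g k - μ • x k, v⟫) :
    ∀ j : ℕ, j < n →
      ∀ y ∈ Submodule.span ℝ
          ((fun i : Fin (n + m) => g i - μ • x i) '' {i : Fin (n + m) | (i : ℕ) < j}),
        gradient (VT L μ x g f) y ∈ Submodule.span ℝ
          ((fun i : Fin (n + m) => g i - μ • x i) '' {i : Fin (n + m) | (i : ℕ) ≤ j}) :=
  stmt7_general hμL x g f hortho hf hsep
end

section
/- Suppose 0 ≤ μ < L, g_* = 0, and for every j ∈ I*_N one has (1/(2L))‖g_j‖² + (μL/(2(L−μ)))‖x_* − x_j + (1/L)g_j‖² ≤ f_* − f_j − ⟨g_j, x_* − x_j⟩. Then V_𝒯(x_*) = f_*, ∇V_𝒯(x_*) = 0, and x_* is a global minimizer of V_𝒯, i.e., V_𝒯(y) ≥ f_* for all y ∈ ℝ^d. -/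
/-!
The vertex `α = δ_*` of the simplex gives `v_𝒯(y, δ_*) = f_* + (μ/2)‖y - x_*‖²` because
`g_* = 0`, so `V_𝒯 ≥ f_*` everywhere. Conversely, for `α` in the simplex, `v_𝒯(x_*, α)` is the
`α`-average of the numbers `f_i + (‖g_i‖² + 2L⟨g_i, x_* - x_i⟩ + Lμ‖x_* - x_i‖²)/(2(L - μ))`
minus a square, and the interpolation condition at `i` says precisely that the `i`-th number is
at most `f_*`. Hence `V_𝒯(x_*) = f_*`, `x_*` is a global minimizer, and the gradient vanishes
there.
-/

open scoped RealInnerProductSpace BigOperators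

open Finset

theorem add_div_le_of_interpolation {E : Type*} [NormedAddCommGroup E] [InnerProductSpace ℝ E]
    {L μ fᵢ fₛ : ℝ} {gᵢ D : E} (hL : L ≠ 0) (hμL : μ ≠ L)
    (h : 1 / (2 * L) * ‖gᵢ‖ ^ 2 + μ * L / (2 * (L - μ)) * ‖D + (1 / L) • gᵢ‖ ^ 2
      ≤ fₛ - fᵢ - ⟪gᵢ, D⟫) :
    fᵢ + (‖gᵢ‖ ^ 2 + 2 * L * ⟪gᵢ, D⟫ + L * μ * ‖D‖ ^ 2) / (2 * (L - μ)) ≤ fₛ := by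
  have he : L - μ ≠ 0 := sub_ne_zero.2 hμL.symm
  have key : fᵢ + (‖gᵢ‖ ^ 2 + 2 * L * ⟪gᵢ, D⟫ + L * μ * ‖D‖ ^ 2) / (2 * (L - μ))
      = fᵢ + ⟪gᵢ, D⟫ + (1 / (2 * L) * ‖gᵢ‖ ^ 2
        + μ * L / (2 * (L - μ)) * ‖D + (1 / L) • gᵢ‖ ^ 2) := by
    rw [norm_add_sq_real, real_inner_smul_right, norm_smul, Real.norm_eq_abs, mul_pow, sq_abs,
      real_inner_comm]
    field_simp
    ring
  linarith

theorem IsLocalMin.gradient_eq_zero {F : Type*} [NormedAddCommGroup F] [InnerProductSpace ℝ F]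
    [CompleteSpace F] {φ : F → ℝ} {a : F} (h : IsLocalMin φ a) : gradient φ a = 0 := by
  rw [gradient, h.fderiv_eq_zero, map_zero]

section Extension

variable {d : ℕ} {I : Type*} [Fintype I] {L μ : ℝ}
  (x g : I → EuclideanSpace ℝ (Fin d)) (f : I → ℝ)

theorem bddAbove_vT_image (y : EuclideanSpace ℝ (Fin d)) :
    BddAbove (vT L μ x g f y '' stdSimplex ℝ I) :=
  ((isCompact_stdSimplex ℝ I).image (by unfold vT; fun_prop)).bddAbove

theorem vT_single_of_g_eq_zero [DecidableEq I] (hμL : μ ≠ L) {i₀ : I} (hg : g i₀ = 0)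
    (y : EuclideanSpace ℝ (Fin d)) :
    vT L μ x g f y (Pi.single i₀ 1) = f i₀ + μ / 2 * ‖y - x i₀‖ ^ 2 := by
  have he : L - μ ≠ 0 := sub_ne_zero.2 hμL.symm
  simp only [vT, Pi.single_apply, ite_smul, ite_mul, one_smul, one_mul, zero_smul, zero_mul,
    sum_ite_eq', mem_univ, if_true, hg, zero_sub]
  simp only [← real_inner_self_eq_norm_sq, inner_sub_left, inner_sub_right, inner_neg_left,
    inner_neg_right, real_inner_smul_left, real_inner_smul_right, real_inner_comm y]
  field_simp
  ring

theorem vT_eq_of_sum_eq_one (hμL : μ ≠ L) (z : EuclideanSpace ℝ (Fin d)) {α : I → ℝ}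
    (hα : ∑ i, α i = 1) :
    vT L μ x g f z α =
      ∑ i, α i * (f i + (‖g i‖ ^ 2 + 2 * L * ⟪g i, z - x i⟫ + L * μ * ‖z - x i‖ ^ 2)
        / (2 * (L - μ)))
      - ‖∑ i, α i • (g i + μ • (z - x i))‖ ^ 2 / (2 * (L - μ)) := by
  have he : L - μ ≠ 0 := sub_ne_zero.2 hμL.symm
  set m := ∑ i, α i • (g i + μ • (z - x i))
  have hm : ∑ i, α i • (g i - μ • x i) = m - μ • z := by
    rw [eq_sub_iff_add_eq, ← one_smul ℝ (μ • z), ← hα, sum_smul, ← sum_add_distrib]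
    exact sum_congr rfl fun i _ => by module
  have hsq : ‖z - (1 / (L - μ)) • (m - μ • z)‖ ^ 2
      = (L ^ 2 * ‖z‖ ^ 2 - 2 * L * ⟪z, m⟫ + ‖m‖ ^ 2) / (L - μ) ^ 2 := by
    simp only [← real_inner_self_eq_norm_sq, inner_sub_left, inner_sub_right,
      real_inner_smul_left, real_inner_smul_right, real_inner_comm z]
    field_simp
    ring
  have hsum : ∑ i, α i * (f i + (‖g i‖ ^ 2 + 2 * L * ⟪g i, z - x i⟫ + L * μ * ‖z - x i‖ ^ 2)
        / (2 * (L - μ)))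
      - ∑ i, α i * (f i + 1 / (2 * (L - μ)) * ‖g i - L • x i‖ ^ 2 - L / 2 * ‖x i‖ ^ 2)
      = (2 * L * ⟪z, m⟫ - L * μ * ‖z‖ ^ 2) / (2 * (L - μ)) := by
    have hinner : ⟪z, m⟫ = ∑ i, α i * ⟪z, g i + μ • (z - x i)⟫ := by
      simp only [m, inner_sum, real_inner_smul_right]
    have hz : ‖z‖ ^ 2 = ∑ i, α i * ‖z‖ ^ 2 := by rw [← sum_mul, hα, one_mul]
    rw [hinner, hz, mul_sum, mul_sum, ← sum_sub_distrib, ← sum_sub_distrib, sum_div]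
    refine sum_congr rfl fun i _ => ?_
    simp only [← real_inner_self_eq_norm_sq, inner_sub_left, inner_sub_right, inner_add_right,
      real_inner_smul_left, real_inner_smul_right, real_inner_comm (g i) z,
      real_inner_comm z (x i), real_inner_comm (g i) (x i)]
    field_simp
    ring
  unfold vT
  rw [hm, hsq]
  -- naming the two sums keeps `field_simp` from rewriting inside them
  set S := ∑ i, α i * (f i + (‖g i‖ ^ 2 + 2 * L * ⟪g i, z - x i⟫ + L * μ * ‖z - x i‖ ^ 2)
        / (2 * (L - μ)))
  set K := ∑ i, α i * (f i + 1 / (2 * (L - μ)) * ‖g i - L • x i‖ ^ 2 - L / 2 * ‖x i‖ ^ 2)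
  field_simp
  field_simp at hsum
  linear_combination -hsum

theorem vT_le_of_interpolation (hL : L ≠ 0) (hμL : μ < L) {i₀ : I}
    (hinterp : ∀ j, 1 / (2 * L) * ‖g j‖ ^ 2
        + μ * L / (2 * (L - μ)) * ‖x i₀ - x j + (1 / L) • g j‖ ^ 2
      ≤ f i₀ - f j - ⟪g j, x i₀ - x j⟫)
    {α : I → ℝ} (hα : α ∈ stdSimplex ℝ I) :
    vT L μ x g f (x i₀) α ≤ f i₀ := by
  have he : 0 < 2 * (L - μ) := by linarith
  rw [vT_eq_of_sum_eq_one x g f hμL.ne (x i₀) hα.2]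
  calc _ ≤ ∑ i, α i * (f i + (‖g i‖ ^ 2 + 2 * L * ⟪g i, x i₀ - x i⟫
          + L * μ * ‖x i₀ - x i‖ ^ 2) / (2 * (L - μ))) :=
        sub_le_self _ (div_nonneg (sq_nonneg _) he.le)
    _ ≤ ∑ i, α i * f i₀ :=
        sum_le_sum fun i _ => mul_le_mul_of_nonneg_left
          (add_div_le_of_interpolation hL hμL.ne (hinterp i)) (hα.1 i)
    _ = f i₀ := by rw [← sum_mul, hα.2, one_mul]

end Extension

/-- `none` plays the role of the index `*`. -/
theorem stmt8 {d N : ℕ} {L μ : ℝ} (hL : 0 < L) (hμ : 0 ≤ μ) (hμL : μ < L)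
    (x g : Option (Fin (N + 1)) → EuclideanSpace ℝ (Fin d)) (f : Option (Fin (N + 1)) → ℝ)
    (hgstar : g none = 0)
    (hinterp : ∀ j : Option (Fin (N + 1)),
      1 / (2 * L) * ‖g j‖ ^ 2 + μ * L / (2 * (L - μ)) * ‖x none - x j + (1 / L) • g j‖ ^ 2
        ≤ f none - f j - ⟪g j, x none - x j⟫) :
    VT L μ x g f (x none) = f none ∧
    gradient (VT L μ x g f) (x none) = 0 ∧
    ∀ y, f none ≤ VT L μ x g f y := by
  have hstar := single_mem_stdSimplex ℝ (none : Option (Fin (N + 1)))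
  have hlow (y) : f none ≤ VT L μ x g f y :=
    calc f none ≤ vT L μ x g f y (Pi.single none 1) := by
          rw [vT_single_of_g_eq_zero x g f hμL.ne hgstar]
          exact le_add_of_nonneg_right (by positivity)
      _ ≤ VT L μ x g f y :=
          le_csSup (bddAbove_vT_image x g f y) (Set.mem_image_of_mem _ hstar)
  have hup : VT L μ x g f (x none) ≤ f none :=
    csSup_le ⟨_, Set.mem_image_of_mem _ hstar⟩ <| Set.forall_mem_image.2 fun _ hα =>
      vT_le_of_interpolation x g f hL.ne' hμL hinterp hα
  have heq : VT L μ x g f (x none) = f none := le_antisymm hup (hlow _)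
  have hmin : IsLocalMin (VT L μ x g f) (x none) := .of_forall fun y => heq.trans_le (hlow y)
  exact ⟨heq, hmin.gradient_eq_zero, hlow⟩
end

section
/- Let 0 < μ < L, R_x > 0, and for integers j ≥ 0 define γ_j = √(μ/L)·√(1 − (1 − √(μ/L))²)·(1 − √(μ/L))^j · R_x and δ_j = √(1 − (1 − √(μ/L))²)·(1 − √(μ/L))^j · R_x. Then: (a) 0 ≤ (μ/L)δ_j ≤ γ_j ≤ δ_j for all j; (b) γ_{j+1}δ_{j+1} = −(γ_j − δ_j)(γ_j − (μ/L)δ_j) for all j (the recurrence holds with equality); (c) Σ_{k=0}^∞ δ_k² = R_x² (so in particular Σ_{k=0}^N δ_k² ≤ R_x² for every N); and (d) for every N, (L²/(2(L−μ)))(2γ_N δ_N − γ_N² − (μ/L)δ_N²) = μ·((2 − √(μ/L))/(1 + √(μ/L)))·(1 − √(μ/L))^{2N} · R_x². -/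
/-!
Write `κ = √(μ/L)` and `ρ = 1 - κ ∈ [0, 1)`. Then `δ_j = √(1 - ρ²) ρ^j R_x` is geometric with
ratio `ρ` and `γ_j = κ δ_j`, so every claim reduces to an identity in `κ`: the recurrence is
`κ ρ² = -(κ - 1)(κ - κ²)`, the squares `δ_j²` form a geometric series whose sum
`(1 - ρ²) R_x² / (1 - ρ²)` is `R_x²`, and the closed form follows from `L - μ = L(1 - κ)(1 + κ)`
and `1 - ρ² = κ(2 - κ)`.
-/

lemma sqrt_div_mem_Ioo {μ L : ℝ} (hμ : 0 < μ) (hμL : μ < L) :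
    0 < √(μ / L) ∧ √(μ / L) < 1 := by
  have hL : 0 < L := hμ.trans hμL
  refine ⟨Real.sqrt_pos.2 (div_pos hμ hL), (Real.sqrt_lt' one_pos).2 ?_⟩
  rw [one_pow]
  exact (div_lt_one hL).2 hμL

lemma sq_mul_le_mul_le_self {κ d : ℝ} (hκ0 : 0 ≤ κ) (hκ1 : κ ≤ 1) (hd : 0 ≤ d) :
    0 ≤ κ ^ 2 * d ∧ κ ^ 2 * d ≤ κ * d ∧ κ * d ≤ d := by
  refine ⟨by positivity, mul_le_mul_of_nonneg_right ?_ hd, mul_le_of_le_one_left hd hκ1⟩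
  nlinarith

lemma sq_sqrt_one_sub_sq_mul_pow {ρ : ℝ} (hρ0 : 0 ≤ ρ) (hρ1 : ρ ≤ 1) (n : ℕ) (R : ℝ) :
    (√(1 - ρ ^ 2) * ρ ^ n * R) ^ 2 = (1 - ρ ^ 2) * R ^ 2 * (ρ ^ 2) ^ n := by
  rw [mul_pow, mul_pow, Real.sq_sqrt (by nlinarith), ← pow_mul, ← pow_mul']
  ring

lemma hasSum_sq_sqrt_one_sub_sq_mul_pow {ρ : ℝ} (hρ0 : 0 ≤ ρ) (hρ1 : ρ < 1) (R : ℝ) :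
    HasSum (fun n : ℕ => (√(1 - ρ ^ 2) * ρ ^ n * R) ^ 2) (R ^ 2) := by
  have hρ2 : ρ ^ 2 < 1 := by nlinarith
  have hgeom := (hasSum_geometric_of_lt_one (sq_nonneg ρ) hρ2).mul_left ((1 - ρ ^ 2) * R ^ 2)
  rwa [mul_right_comm, mul_inv_cancel₀ (by linarith), one_mul,
    ← funext (sq_sqrt_one_sub_sq_mul_pow hρ0 hρ1.le · R)] at hgeom

lemma lowerBound_eq_of_sq_eq_div {μ L κ : ℝ} (hL : 0 < L) (hκ0 : 0 ≤ κ) (hκ1 : κ < 1) (hκ : κ ^ 2 = μ / L)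
    (d : ℝ) :
    L ^ 2 / (2 * (L - μ)) * (2 * (κ * d) * d - (κ * d) ^ 2 - μ / L * d ^ 2)
      = L * κ / (1 + κ) * d ^ 2 := by
  have hμ : μ = L * κ ^ 2 := by rw [hκ]; field_simp
  have h1κ : 1 - κ ≠ 0 := by linarith
  have h1κ' : 1 + κ ≠ 0 := by linarith
  rw [hμ, show L - L * κ ^ 2 = L * (1 - κ) * (1 + κ) by ring]
  field_simp
  ring

/-- The explicit geometric sequences `γ_j, δ_j` satisfy the conditions of Theorem
`lowerPEP` for `0 < μ < L` (with the recurrence holding with equality), their squared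
`δ`'s sum to `R_x²`, and the resulting lower-bound quantity has the stated closed form. -/
theorem stmt13 {L μ Rx : ℝ} (hμ : 0 < μ) (hμL : μ < L) (hRx : 0 < Rx)
    (γ δ : ℕ → ℝ)
    (hγ : ∀ j : ℕ, γ j = Real.sqrt (μ / L)
        * Real.sqrt (1 - (1 - Real.sqrt (μ / L)) ^ 2)
        * (1 - Real.sqrt (μ / L)) ^ j * Rx)
    (hδ : ∀ j : ℕ, δ j = Real.sqrt (1 - (1 - Real.sqrt (μ / L)) ^ 2)
        * (1 - Real.sqrt (μ / L)) ^ j * Rx) :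
    (∀ j : ℕ, 0 ≤ μ / L * δ j ∧ μ / L * δ j ≤ γ j ∧ γ j ≤ δ j) ∧
    (∀ j : ℕ, γ (j + 1) * δ (j + 1) = -((γ j - δ j) * (γ j - μ / L * δ j))) ∧
    (HasSum (fun k : ℕ => δ k ^ 2) (Rx ^ 2) ∧
      ∀ N : ℕ, ∑ k ∈ Finset.range (N + 1), δ k ^ 2 ≤ Rx ^ 2) ∧
    (∀ N : ℕ, L ^ 2 / (2 * (L - μ)) * (2 * γ N * δ N - γ N ^ 2 - μ / L * δ N ^ 2)
        = μ * ((2 - Real.sqrt (μ / L)) / (1 + Real.sqrt (μ / L)))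
          * (1 - Real.sqrt (μ / L)) ^ (2 * N) * Rx ^ 2) := by
  have hL : 0 < L := hμ.trans hμL
  obtain ⟨hκ0, hκ1⟩ := sqrt_div_mem_Ioo hμ hμL
  have hκ : √(μ / L) ^ 2 = μ / L := Real.sq_sqrt (div_pos hμ hL).le
  set κ := √(μ / L)
  have hρ0 : 0 ≤ 1 - κ := by linarith
  have hγδ (j : ℕ) : γ j = κ * δ j := by rw [hγ, hδ]; ring
  have hδ_succ (j : ℕ) : δ (j + 1) = (1 - κ) * δ j := by rw [hδ, hδ]; ring
  have hδ_nonneg (j : ℕ) : 0 ≤ δ j := by rw [hδ]; positivity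
  have hsum : HasSum (fun k => δ k ^ 2) (Rx ^ 2) := by
    simpa only [hδ] using hasSum_sq_sqrt_one_sub_sq_mul_pow hρ0 (by linarith) Rx
  refine ⟨fun j => ?_, fun j => ?_,
    ⟨hsum, fun N => sum_le_hasSum _ (fun _ _ => sq_nonneg _) hsum⟩, fun N => ?_⟩
  · rw [hγδ, ← hκ]
    exact sq_mul_le_mul_le_self hκ0.le hκ1.le (hδ_nonneg j)
  · rw [hγδ, hγδ, hδ_succ, ← hκ]
    ring
  · rw [hγδ, lowerBound_eq_of_sq_eq_div hL hκ0.le hκ1 hκ, hδ,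
      sq_sqrt_one_sub_sq_mul_pow hρ0 (by linarith), ← pow_mul,
      show μ = L * κ ^ 2 by rw [hκ]; field_simp]
    field_simp
    ring
end

section
/- Let 0 < μ < L and q = μ/L. Then the sequence (λ_i) is well-defined and satisfies, for every i ≥ 0: 0 ≤ λ_i ≤ √q, hence q² ≤ q − (1−q)λ_i² ≤ q (in particular q − (1−q)λ_i² ≥ 0), and moreover ((1 − √q)/(1 + q))·λ_i ≤ λ_{i+1} ≤ (1 − q)·λ_i. -/
/-!
For `x ∈ [0, √q]` the radicand `q − (1−q)x²` lies in `[q², q]`, so its square root lies in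
`[q, √q]`. Comparing the factor `(1 − √(q − (1−q)x²))/(1 + x²)` with these extremes gives both
bounds on `λ_{i+1}`, and the upper bound `(1 − q)λ_i ≤ λ_i` keeps the sequence in `[0, √q]`.
-/

open Real Set

noncomputable def lambdaStep (q x : ℝ) : ℝ :=
  (1 - √(q - (1 - q) * x ^ 2)) / (1 + x ^ 2) * x

section

variable {q x : ℝ}

lemma radicand_mem_Icc (hq1 : q ≤ 1) (hx : x ^ 2 ≤ q) :
    q - (1 - q) * x ^ 2 ∈ Icc (q ^ 2) q := by
  constructor <;> nlinarith [sq_nonneg x]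

lemma sqrt_radicand_mem_Icc (hq0 : 0 ≤ q) (hq1 : q ≤ 1) (hx : x ^ 2 ≤ q) :
    √(q - (1 - q) * x ^ 2) ∈ Icc q √q := by
  obtain ⟨hlo, hhi⟩ := radicand_mem_Icc hq1 hx
  exact ⟨(sqrt_sq hq0).symm.le.trans (sqrt_le_sqrt hlo), sqrt_le_sqrt hhi⟩

lemma lambdaStep_le (hq0 : 0 ≤ q) (hq1 : q ≤ 1) (hx0 : 0 ≤ x) (hx : x ^ 2 ≤ q) :
    lambdaStep q x ≤ (1 - q) * x := by
  have hs := (sqrt_radicand_mem_Icc hq0 hq1 hx).1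
  have hfactor : (1 - √(q - (1 - q) * x ^ 2)) / (1 + x ^ 2) ≤ 1 - q := by
    rw [div_le_iff₀ (by positivity)]
    nlinarith [sq_nonneg x]
  exact mul_le_mul_of_nonneg_right hfactor hx0

lemma le_lambdaStep (hq0 : 0 ≤ q) (hq1 : q ≤ 1) (hx0 : 0 ≤ x) (hx : x ^ 2 ≤ q) :
    (1 - √q) / (1 + q) * x ≤ lambdaStep q x := by
  have hs := (sqrt_radicand_mem_Icc hq0 hq1 hx).2
  have hsqrt_le_one : √q ≤ 1 := sqrt_le_one.mpr hq1
  have hfactor : (1 - √q) / (1 + q) ≤ (1 - √(q - (1 - q) * x ^ 2)) / (1 + x ^ 2) :=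
    div_le_div₀ (by linarith) (by linarith) (by positivity) (by linarith)
  exact mul_le_mul_of_nonneg_right hfactor hx0

lemma mapsTo_lambdaStep (hq0 : 0 ≤ q) (hq1 : q ≤ 1) :
    MapsTo (lambdaStep q) (Icc 0 √q) (Icc 0 √q) := by
  rintro x ⟨hx0, hx⟩
  have hxq : x ^ 2 ≤ q := (le_sqrt hx0 hq0).mp hx
  have hcoeff : 0 ≤ (1 - √q) / (1 + q) :=
    div_nonneg (sub_nonneg.mpr (sqrt_le_one.mpr hq1)) (by linarith)
  refine ⟨(mul_nonneg hcoeff hx0).trans (le_lambdaStep hq0 hq1 hx0 hxq), ?_⟩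
  calc lambdaStep q x ≤ (1 - q) * x := lambdaStep_le hq0 hq1 hx0 hxq
    _ ≤ x := by nlinarith
    _ ≤ √q := hx

end

/-- The sequence `λ_i` defined by `λ_0 = √q` and
`λ_{i+1} = ((1 − √(q − (1−q)λ_i²))/(1 + λ_i²))·λ_i`, where `q = μ/L ∈ (0,1)`, is
well-defined: it stays in `[0, √q]`, so that `q² ≤ q − (1−q)λ_i² ≤ q` (in particular the
argument of the square root is nonnegative), and moreover
`((1 − √q)/(1 + q))·λ_i ≤ λ_{i+1} ≤ (1 − q)·λ_i`. -/
theorem stmt15 {L μ : ℝ} (hμ : 0 < μ) (hμL : μ < L) (q : ℝ) (hq : q = μ / L)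
    (lam : ℕ → ℝ) (hlam0 : lam 0 = Real.sqrt q)
    (hlamrec : ∀ i : ℕ, lam (i + 1)
      = (1 - Real.sqrt (q - (1 - q) * lam i ^ 2)) / (1 + lam i ^ 2) * lam i) :
    ∀ i : ℕ,
      (0 ≤ lam i ∧ lam i ≤ Real.sqrt q) ∧
      (q ^ 2 ≤ q - (1 - q) * lam i ^ 2 ∧ q - (1 - q) * lam i ^ 2 ≤ q ∧
        0 ≤ q - (1 - q) * lam i ^ 2) ∧
      ((1 - Real.sqrt q) / (1 + q) * lam i ≤ lam (i + 1) ∧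
        lam (i + 1) ≤ (1 - q) * lam i) := by
  have hL : 0 < L := hμ.trans hμL
  have hq0 : 0 ≤ q := hq ▸ div_nonneg hμ.le hL.le
  have hq1 : q ≤ 1 := hq ▸ (div_le_one hL).mpr hμL.le
  have hmem : ∀ i, lam i ∈ Icc 0 √q := by
    intro i
    induction i with
    | zero => rw [hlam0]; exact ⟨sqrt_nonneg q, le_rfl⟩
    | succ i ih => exact hlamrec i ▸ mapsTo_lambdaStep hq0 hq1 ih
  intro i
  obtain ⟨hi0, hi⟩ := hmem i
  have hiq : lam i ^ 2 ≤ q := (le_sqrt hi0 hq0).mp hi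
  obtain ⟨hlo, hhi⟩ := radicand_mem_Icc hq1 hiq
  refine ⟨⟨hi0, hi⟩, ⟨hlo, hhi, (sq_nonneg q).trans hlo⟩, ?_, ?_⟩
  · exact hlamrec i ▸ le_lambdaStep hq0 hq1 hi0 hiq
  · exact hlamrec i ▸ lambdaStep_le hq0 hq1 hi0 hiq
end

section
/- Let q ∈ (0,1), N ≥ 1, and let (λ_i) be the sequence with λ_0 = √q and λ_{i+1} = ((1 − √(q − (1−q)λ_i²))/(1 + λ_i²))·λ_i. Suppose (γ_i)_{0≤i≤N}, (δ_i)_{0≤i≤N} satisfy: 0 ≤ qδ_i ≤ γ_i ≤ δ_i for all i; γ_{i+1}δ_{i+1} = −(γ_i − δ_i)(γ_i − qδ_i) for 0 ≤ i ≤ N−1; Σ_{i=0}^N δ_i² = 1; γ_N = √q·λ_N and δ_N = λ_N/√q. Define α = √((q − λ_{N+1}²)/(q − (1−q)λ_N²)) and set γ̂_i = √α·γ_i and δ̂_i = √α·δ_i for 0 ≤ i ≤ N−1, γ̂_N = √(q(αλ_N² + α − 1)), δ̂_N = √((αλ_N² − λ_{N+1}² − q(α−1))/q), γ̂_{N+1}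 = √q·λ_{N+1}, and δ̂_{N+1} = λ_{N+1}/√q. Then: (a) 0 ≤ qδ̂_i ≤ γ̂_i ≤ δ̂_i for all 0 ≤ i ≤ N+1; (b) γ̂_{i+1}δ̂_{i+1} = −(γ̂_i − δ̂_i)(γ̂_i − qδ̂_i) for all 0 ≤ i ≤ N; (c) γ̂_{N+1}δ̂_{N+1} = λ_{N+1}²; and (d) Σ_{i=0}^{N+1} δ̂_i² = 1. -/
/-!
Write `t = λ_N²` and `s = √(q - (1 - q) t)`, so that `q = (s² + t) / (1 + t)`,
`λ_{N+1}² = (1 - s)² t / (1 + t)²` and `q - λ_{N+1}² = ((s + t) / (1 + t))²`. Hence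
`α = (s + t) / (s (1 + t))`, `γ̂_N² = q t / s`, `δ̂_N² = α² s t / q` and `γ̂_N δ̂_N = α t = α γ_N δ_N`,
and every claimed identity becomes a rational identity in `s` and `t`. The inequalities at `N`
reduce to `(α s)² = q - λ_{N+1}² ≤ 1` and `λ_{N+1}² ≤ q (1 - q)`.
-/

open Finset Real

def Admissible (q γ δ : ℝ) : Prop := 0 ≤ q * δ ∧ q * δ ≤ γ ∧ γ ≤ δ

def IsFeasible (q : ℝ) (N : ℕ) (γ δ : ℕ → ℝ) : Prop :=
  (∀ i ≤ N, Admissible q (γ i) (δ i)) ∧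
    ∀ i < N, γ (i + 1) * δ (i + 1) = -((γ i - δ i) * (γ i - q * δ i))

namespace Admissible

variable {q γ δ : ℝ}

lemma mul_left (h : Admissible q γ δ) {c : ℝ} (hc : 0 ≤ c) : Admissible q (c * γ) (c * δ) := by
  obtain ⟨h₀, h₁, h₂⟩ := h
  refine ⟨?_, ?_, ?_⟩
  · rw [mul_left_comm]; exact mul_nonneg hc h₀
  · rw [mul_left_comm]; exact mul_le_mul_of_nonneg_left h₁ hc
  · exact mul_le_mul_of_nonneg_left h₂ hc

lemma of_sq (hq : 0 ≤ q) (hγ : 0 ≤ γ) (hδ : 0 ≤ δ) (h₁ : q ^ 2 * δ ^ 2 ≤ γ ^ 2)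
    (h₂ : γ ^ 2 ≤ δ ^ 2) : Admissible q γ δ :=
  ⟨mul_nonneg hq hδ, (sq_le_sq₀ (mul_nonneg hq hδ) hγ).1 (by rwa [mul_pow]),
    (sq_le_sq₀ hγ hδ).1 h₂⟩

end Admissible

lemma admissible_sqrt_mul_div_sqrt {q l : ℝ} (hq₀ : 0 < q) (hq₁ : q ≤ 1) (hl : 0 ≤ l) :
    Admissible q (√q * l) (l / √q) := by
  have hsq : √q ^ 2 = q := sq_sqrt hq₀.le
  refine .of_sq hq₀.le (by positivity) (by positivity) ?_ ?_
  · rw [mul_pow, div_pow, hsq]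
    exact le_of_eq (by field_simp)
  · rw [mul_pow, div_pow, hsq, le_div_iff₀ hq₀]
    nlinarith [sq_nonneg l, mul_le_mul_of_nonneg_left hq₁ hq₀.le]

lemma sqrt_mul_mul_div_sqrt {q : ℝ} (hq : 0 < q) (l : ℝ) : √q * l * (l / √q) = l ^ 2 := by
  have := (sqrt_pos.2 hq).ne'
  field_simp

lemma IsFeasible.extend {q c : ℝ} {N : ℕ} {γ δ γ' δ' : ℕ → ℝ} (h : IsFeasible q N γ δ)
    (hc : 0 ≤ c) (hγ' : ∀ i < N, γ' i = c * γ i) (hδ' : ∀ i < N, δ' i = c * δ i)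
    (hN : Admissible q (γ' N) (δ' N)) (hN₁ : Admissible q (γ' (N + 1)) (δ' (N + 1)))
    (hjoin : γ' N * δ' N = c ^ 2 * (γ N * δ N))
    (hlast : γ' (N + 1) * δ' (N + 1) = -((γ' N - δ' N) * (γ' N - q * δ' N))) :
    IsFeasible q (N + 1) γ' δ' := by
  obtain ⟨hadm, hrec⟩ := h
  refine ⟨fun i hi => ?_, fun i hi => ?_⟩
  · rcases lt_trichotomy i N with hiN | rfl | hiN
    · rw [hγ' i hiN, hδ' i hiN]
      exact (hadm i hiN.le).mul_left hc
    · exact hN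
    · obtain rfl : i = N + 1 := by omega
      exact hN₁
  · rcases lt_trichotomy (i + 1) N with hiN | hiN | hiN
    · rw [hγ' _ hiN, hδ' _ hiN, hγ' i (by omega), hδ' i (by omega)]
      linear_combination c ^ 2 * hrec i (by omega)
    · have hi : i < N := by omega
      rw [hiN, hjoin, ← hiN, hrec i hi, hγ' i hi, hδ' i hi]
      ring
    · obtain rfl : i = N := by omega
      exact hlast

lemma sum_range_sq_of_eq_mul {c : ℝ} {N : ℕ} {δ δ' : ℕ → ℝ} (h : ∀ i < N, δ' i = c * δ i) :
    ∑ i ∈ range N, δ' i ^ 2 = c ^ 2 * ∑ i ∈ range N, δ i ^ 2 := by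
  rw [mul_sum]
  exact sum_congr rfl fun i hi => by rw [h i (mem_range.1 hi), mul_pow]

section Step

variable {q s t L α : ℝ}

lemma step_q_eq (hs : s ^ 2 = q - (1 - q) * t) (ht : 0 ≤ t) : q = (s ^ 2 + t) / (1 + t) := by
  rw [eq_div_iff (by positivity)]
  linear_combination -hs

lemma step_sub_sq (hs : s ^ 2 = q - (1 - q) * t) (ht : 0 ≤ t)
    (hL : L ^ 2 = (1 - s) ^ 2 * t / (1 + t) ^ 2) : q - L ^ 2 = ((s + t) / (1 + t)) ^ 2 := by
  have : (1 + t) ≠ 0 := by positivity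
  rw [hL]
  field_simp
  linear_combination (-(1 + t)) * hs

lemma step_gamma_radicand (hs₀ : 0 < s) (ht : 0 ≤ t) (hα : α = (s + t) / (s * (1 + t))) :
    α * t + α - 1 = t / s := by
  have : (1 + t) ≠ 0 := by positivity
  subst hα
  field_simp
  ring

lemma step_delta_radicand (hs : s ^ 2 = q - (1 - q) * t) (hs₀ : 0 < s) (ht : 0 ≤ t)
    (hL : L ^ 2 = (1 - s) ^ 2 * t / (1 + t) ^ 2) (hα : α = (s + t) / (s * (1 + t))) :
    α * t - L ^ 2 - q * (α - 1) = α ^ 2 * s * t := by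
  have : (1 + t) ≠ 0 := by positivity
  subst hα
  rw [hL, step_q_eq hs ht]
  field_simp
  ring

lemma step_recurrence (hs : s ^ 2 = q - (1 - q) * t) (hs₀ : 0 < s) (ht : 0 ≤ t)
    (hL : L ^ 2 = (1 - s) ^ 2 * t / (1 + t) ^ 2) (hα : α = (s + t) / (s * (1 + t))) :
    L ^ 2 = -(q * (t / s)) + (1 + q) * (α * t) - α ^ 2 * s * t := by
  have : (1 + t) ≠ 0 := by positivity
  subst hα
  rw [hL, step_q_eq hs ht]
  field_simp
  ring

lemma step_sum (hs : s ^ 2 = q - (1 - q) * t) (hs₀ : 0 < s) (ht : 0 ≤ t)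
    (hL : L ^ 2 = (1 - s) ^ 2 * t / (1 + t) ^ 2) (hα : α = (s + t) / (s * (1 + t))) :
    α * (q - t) + α ^ 2 * s * t + L ^ 2 = q := by
  have : (1 + t) ≠ 0 := by positivity
  subst hα
  rw [hL, step_q_eq hs ht]
  field_simp
  ring

lemma step_sq_le_mul_one_sub (hq : q ≤ 1) (hs : s ^ 2 = q - (1 - q) * t) (hs₀ : 0 ≤ s) (ht : 0 ≤ t)
    (htq : t ≤ q) (hL : L ^ 2 = (1 - s) ^ 2 * t / (1 + t) ^ 2) : L ^ 2 ≤ q * (1 - q) := by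
  have hs₁ : s ≤ 1 := by nlinarith
  have h : 1 - s ≤ (1 - q) * (1 + t) := by nlinarith
  have hsq : (1 - s) ^ 2 ≤ ((1 - q) * (1 + t)) ^ 2 := pow_le_pow_left₀ (by linarith) h 2
  calc L ^ 2 ≤ ((1 - q) * (1 + t)) ^ 2 * t / (1 + t) ^ 2 := by
        rw [hL]; gcongr
    _ = (1 - q) * ((1 - q) * t) := by field_simp
    _ ≤ 1 * ((1 - q) * q) := by gcongr; linarith
    _ = q * (1 - q) := by ring

lemma step_admissible (hq₀ : 0 < q) (hq₁ : q ≤ 1) (hs : s ^ 2 = q - (1 - q) * t) (hs₀ : 0 < s)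
    (ht : 0 ≤ t) (htq : t ≤ q) (hL : L ^ 2 = (1 - s) ^ 2 * t / (1 + t) ^ 2)
    (hα : α = (s + t) / (s * (1 + t))) : Admissible q √(q * (t / s)) √(α ^ 2 * s * t / q) := by
  have hαs : (α * s) ^ 2 = q - L ^ 2 := by
    rw [step_sub_sq hs ht hL, hα]
    field_simp
  have hL₂ := step_sq_le_mul_one_sub hq₁ hs hs₀.le ht htq hL
  refine .of_sq hq₀.le (sqrt_nonneg _) (sqrt_nonneg _) ?_ ?_ <;>
    rw [sq_sqrt (by positivity), sq_sqrt (by positivity)]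
  · calc q ^ 2 * (α ^ 2 * s * t / q) = (α * s) ^ 2 * (q * (t / s)) := by field_simp
      _ ≤ 1 * (q * (t / s)) := by gcongr; nlinarith [sq_nonneg L]
      _ = q * (t / s) := one_mul _
  · calc q * (t / s) = q ^ 2 * (t / s) / q := by field_simp
      _ ≤ (q - L ^ 2) * (t / s) / q := by gcongr; linarith
      _ = α ^ 2 * s * t / q := by rw [← hαs]; field_simp

end Step

lemma extension_endpoint {q l L α g d : ℝ} (hq₀ : 0 < q) (hq₁ : q ≤ 1) (hl : 0 ≤ l) (hlq : l ^ 2 ≤ q)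
    (hL : L = (1 - √(q - (1 - q) * l ^ 2)) / (1 + l ^ 2) * l)
    (hα : α = √((q - L ^ 2) / (q - (1 - q) * l ^ 2)))
    (hg : g = √(q * (α * l ^ 2 + α - 1)))
    (hd : d = √((α * l ^ 2 - L ^ 2 - q * (α - 1)) / q)) :
    0 ≤ L ∧ 0 ≤ α ∧ Admissible q g d ∧ g * d = α * l ^ 2 ∧
      L ^ 2 = -((g - d) * (g - q * d)) ∧ α * (q - l ^ 2) + q * d ^ 2 + L ^ 2 = q := by
  set t := l ^ 2 with ht_def
  set s := √(q - (1 - q) * t)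
  have ht : 0 ≤ t := sq_nonneg l
  have hdisc : q ^ 2 ≤ q - (1 - q) * t := by nlinarith
  have hs : s ^ 2 = q - (1 - q) * t := sq_sqrt (by nlinarith)
  have hs₀ : 0 < s := sqrt_pos.2 (by nlinarith)
  have hs₁ : s ≤ 1 := by nlinarith
  have hL₀ : 0 ≤ L := by
    rw [hL]; exact mul_nonneg (div_nonneg (sub_nonneg.2 hs₁) (by positivity)) hl
  have hL₂ : L ^ 2 = (1 - s) ^ 2 * t / (1 + t) ^ 2 := by
    rw [hL, mul_pow, div_pow, ← ht_def]; ring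
  have hα' : α = (s + t) / (s * (1 + t)) := by
    rw [hα, step_sub_sq hs ht hL₂, ← hs, ← div_pow, sqrt_sq (by positivity), div_div,
      mul_comm]
  rw [step_gamma_radicand hs₀ ht hα'] at hg
  rw [step_delta_radicand hs hs₀ ht hL₂ hα'] at hd
  have hg₂ : g ^ 2 = q * (t / s) := by rw [hg, sq_sqrt (by positivity)]
  have hqd₂ : q * d ^ 2 = α ^ 2 * s * t := by
    rw [hd, sq_sqrt (by rw [hα']; positivity)]
    field_simp
  have hgd : g * d = α * t := by
    rw [hg, hd, ← sqrt_mul (by positivity), ← sqrt_sq (by rw [hα']; positivity : 0 ≤ α * t)]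
    congr 1
    field_simp
  refine ⟨hL₀, by rw [hα']; positivity,
    hg ▸ hd ▸ step_admissible hq₀ hq₁ hs hs₀ ht hlq hL₂ hα', hgd, ?_, ?_⟩
  · linear_combination step_recurrence hs hs₀ ht hL₂ hα' + hg₂ - (1 + q) * hgd + hqd₂
  · linear_combination step_sum hs hs₀ ht hL₂ hα' + hqd₂

theorem stmt19_general {q : ℝ} (hq0 : 0 < q) (hq1 : q < 1) {N : ℕ}
    (lam : ℕ → ℝ)
    (hlamrec : ∀ i : ℕ, lam (i + 1)
      = (1 - Real.sqrt (q - (1 - q) * lam i ^ 2)) / (1 + lam i ^ 2) * lam i)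
    (γ δ : ℕ → ℝ)
    (h1 : ∀ i ≤ N, 0 ≤ q * δ i ∧ q * δ i ≤ γ i ∧ γ i ≤ δ i)
    (h2 : ∀ i < N, γ (i + 1) * δ (i + 1) = -((γ i - δ i) * (γ i - q * δ i)))
    (h3 : ∑ i ∈ Finset.range (N + 1), δ i ^ 2 = 1)
    (hγN : γ N = Real.sqrt q * lam N) (hδN : δ N = lam N / Real.sqrt q)
    (α : ℝ) (hα : α = Real.sqrt ((q - lam (N + 1) ^ 2) / (q - (1 - q) * lam N ^ 2)))
    (γ' δ' : ℕ → ℝ)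
    (hγ'lt : ∀ i < N, γ' i = Real.sqrt α * γ i)
    (hδ'lt : ∀ i < N, δ' i = Real.sqrt α * δ i)
    (hγ'N : γ' N = Real.sqrt (q * (α * lam N ^ 2 + α - 1)))
    (hδ'N : δ' N = Real.sqrt ((α * lam N ^ 2 - lam (N + 1) ^ 2 - q * (α - 1)) / q))
    (hγ'N1 : γ' (N + 1) = Real.sqrt q * lam (N + 1))
    (hδ'N1 : δ' (N + 1) = lam (N + 1) / Real.sqrt q) :
    (∀ i ≤ N + 1, 0 ≤ q * δ' i ∧ q * δ' i ≤ γ' i ∧ γ' i ≤ δ' i) ∧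
    (∀ i ≤ N, γ' (i + 1) * δ' (i + 1) = -((γ' i - δ' i) * (γ' i - q * δ' i))) ∧
    (γ' (N + 1) * δ' (N + 1) = lam (N + 1) ^ 2) ∧
    (∑ i ∈ Finset.range (N + 2), δ' i ^ 2 = 1) := by
  have hδN₂ : δ N ^ 2 = lam N ^ 2 / q := by rw [hδN, div_pow, sq_sqrt hq0.le]
  have hl : 0 ≤ lam N := by
    have h := (mul_nonneg_iff_of_pos_left hq0).1 (h1 N le_rfl).1
    rw [hδN] at h
    simpa [(sqrt_pos.2 hq0).ne'] using mul_nonneg h (sqrt_nonneg q)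
  have hlq : lam N ^ 2 ≤ q := by
    have h : δ N ^ 2 ≤ 1 := h3 ▸ single_le_sum (fun i _ => sq_nonneg (δ i)) (self_mem_range_succ N)
    rwa [hδN₂, div_le_one hq0] at h
  obtain ⟨hL₀, hα₀, hadmN, hjoin, hlast, hsum⟩ :=
    extension_endpoint hq0 hq1.le hl hlq (hlamrec N) hα hγ'N hδ'N
  have hc : γ' (N + 1) * δ' (N + 1) = lam (N + 1) ^ 2 := by
    rw [hγ'N1, hδ'N1, sqrt_mul_mul_div_sqrt hq0]
  have hfeas : IsFeasible q (N + 1) γ' δ' := by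
    refine IsFeasible.extend ⟨h1, h2⟩ (sqrt_nonneg α) hγ'lt hδ'lt hadmN ?_ ?_ (hc.trans hlast)
    · rw [hγ'N1, hδ'N1]; exact admissible_sqrt_mul_div_sqrt hq0 hq1.le hL₀
    · rw [hjoin, hγN, hδN, sqrt_mul_mul_div_sqrt hq0, sq_sqrt hα₀]
  have hS : ∑ i ∈ range N, δ i ^ 2 = 1 - lam N ^ 2 / q := by
    rw [sum_range_succ, hδN₂] at h3; linarith
  refine ⟨hfeas.1, fun i hi => hfeas.2 i (Nat.lt_succ_of_le hi), hc, ?_⟩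
  rw [sum_range_succ, sum_range_succ, sum_range_sq_of_eq_mul hδ'lt, sq_sqrt hα₀, hS, hδ'N1,
    div_pow, sq_sqrt hq0.le]
  field_simp
  linear_combination hsum

/-- The inductive step in the proof of Corollary `exactLower`: if `(γ_i), (δ_i)` satisfy
the conditions of Theorem `lowerPEP` with equality, unit sum of `δ²`'s, and endpoint
values `γ_N = √q·λ_N`, `δ_N = λ_N/√q`, then the rescaled/extended sequences
`(γ̂_i), (δ̂_i)` satisfy the same conditions one step further. -/
theorem stmt19 {q : ℝ} (hq0 : 0 < q) (hq1 : q < 1) {N : ℕ} (hN : 1 ≤ N)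
    (lam : ℕ → ℝ) (hlam0 : lam 0 = Real.sqrt q)
    (hlamrec : ∀ i : ℕ, lam (i + 1)
      = (1 - Real.sqrt (q - (1 - q) * lam i ^ 2)) / (1 + lam i ^ 2) * lam i)
    (γ δ : ℕ → ℝ)
    (h1 : ∀ i ≤ N, 0 ≤ q * δ i ∧ q * δ i ≤ γ i ∧ γ i ≤ δ i)
    (h2 : ∀ i < N, γ (i + 1) * δ (i + 1) = -((γ i - δ i) * (γ i - q * δ i)))
    (h3 : ∑ i ∈ Finset.range (N + 1), δ i ^ 2 = 1)
    (hγN : γ N = Real.sqrt q * lam N) (hδN : δ N = lam N / Real.sqrt q)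
    (α : ℝ) (hα : α = Real.sqrt ((q - lam (N + 1) ^ 2) / (q - (1 - q) * lam N ^ 2)))
    (γ' δ' : ℕ → ℝ)
    (hγ'lt : ∀ i < N, γ' i = Real.sqrt α * γ i)
    (hδ'lt : ∀ i < N, δ' i = Real.sqrt α * δ i)
    (hγ'N : γ' N = Real.sqrt (q * (α * lam N ^ 2 + α - 1)))
    (hδ'N : δ' N = Real.sqrt ((α * lam N ^ 2 - lam (N + 1) ^ 2 - q * (α - 1)) / q))
    (hγ'N1 : γ' (N + 1) = Real.sqrt q * lam (N + 1))
    (hδ'N1 : δ' (N + 1) = lam (N + 1) / Real.sqrt q) :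
    (∀ i ≤ N + 1, 0 ≤ q * δ' i ∧ q * δ' i ≤ γ' i ∧ γ' i ≤ δ' i) ∧
    (∀ i ≤ N, γ' (i + 1) * δ' (i + 1) = -((γ' i - δ' i) * (γ' i - q * δ' i))) ∧
    (γ' (N + 1) * δ' (N + 1) = lam (N + 1) ^ 2) ∧
    (∑ i ∈ Finset.range (N + 2), δ' i ^ 2 = 1) :=
  stmt19_general hq0 hq1 lam hlamrec γ δ h1 h2 h3 hγN hδN α hα γ' δ' hγ'lt hδ'lt hγ'N hδ'N hγ'N1
    hδ'N1
end
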